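/- arXiv:1601.02238 — 8 statements merged into one kernel-verified Lean document; each statement's English description precedes it below -/
import Mathlib

section
/- Let u : Z_+^2 \ {0} → R_+ be a function that is eventually decreasing in both arguments, let α₁, α₂ > 0, let b₁ : (0,∞) → (0,∞) be strictly increasing and regularly varying with index 1/α₁, let b₂ be strictly increasing and regularly varying with index 1/α₂, and let h : (0,∞) → (0,∞) be regularly varying with index ρ < 0. Suppose lim_{n→∞, n ∈ N} u(⌊b₁(n) x⌋, ⌊b₂(n) y⌋)/h(n) = λ(x,y) > 0 for all x,y > 0. Then the limit function λ satisfies the scaling property λ(s^{1/α₁} x, s^{1/α₂} y) = s^ρ λ(x,y) for all s, x, y > 0. -/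
/-!
Along the subsequences `n = q k` and `n = p k` the ratios `b_i(p k) / b_i(q k)` and
`h(p k) / h(q k)` converge to `(p/q)^{1/α_i}` and `(p/q)^ρ`. Once `(p/q)^{1/α_i}` beats the ratio
of the arguments, the indices at `p k` eventually dominate those at `q k`, so eventual
monotonicity of `u` compares the two normalized sequences and gives
`(p/q)^ρ λ(x', y') ≤ λ(x, y)`. Letting `p/q` decrease to a real `r` extends this to
`r^ρ λ(x', y') ≤ λ(x, y)` whenever `x ≤ r^{1/α₁} x'` and `y ≤ r^{1/α₂} y'`, and the two choices
`r = s` and `r = s⁻¹` give the two halves of the scaling identity.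
-/

open Filter Topology Set

def IsRegularlyVarying (f : ℝ → ℝ) (ρ : ℝ) : Prop :=
  ∀ x : ℝ, 0 < x → Tendsto (fun t : ℝ => f (t * x) / f t) atTop (𝓝 (x ^ ρ))

theorem Monotone.tendsto_atTop_of_tendsto_div {g : ℝ → ℝ} (hg : Monotone g) (hpos : ∃ t, 0 < g t)
    {x c : ℝ} (hx : 0 < x) (hc : c ≠ 1)
    (hlim : Tendsto (fun t => g (t * x) / g t) atTop (𝓝 c)) : Tendsto g atTop atTop := by
  rw [hg.tendsto_atTop_atTop_iff]
  by_contra! hbounded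
  have hbdd : BddAbove (range g) := by
    obtain ⟨M, hM⟩ := hbounded
    exact ⟨M, forall_mem_range.2 fun t => (hM t).le⟩
  have hL := tendsto_atTop_ciSup hg hbdd
  obtain ⟨t, ht⟩ := hpos
  have hL0 : (⨆ t, g t) ≠ 0 := (ht.trans_le (le_ciSup hbdd t)).ne'
  have hone : Tendsto (fun t => g (t * x) / g t) atTop (𝓝 1) := by
    have := (hL.comp (tendsto_id.atTop_mul_const hx)).div hL hL0
    rwa [div_self hL0] at this
  exact hc (tendsto_nhds_unique hlim hone)

theorem IsRegularlyVarying.tendsto_atTop {f : ℝ → ℝ} {β : ℝ} (hf : IsRegularlyVarying f β)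
    (hβ : 0 < β) (hmono : MonotoneOn f (Ioi 0)) (hpos : ∀ t, 0 < t → 0 < f t) :
    Tendsto f atTop atTop := by
  have hg : Monotone fun t => f (max t 1) := fun a c hac =>
    hmono (mem_Ioi.2 (lt_max_of_lt_right one_pos)) (mem_Ioi.2 (lt_max_of_lt_right one_pos))
      (max_le_max_right 1 hac)
  have hfg : (fun t => f (max t 1)) =ᶠ[atTop] f := by
    filter_upwards [eventually_ge_atTop 1] with t ht
    rw [max_eq_left ht]
  have hratio : Tendsto (fun t => f (max (t * 2) 1) / f (max t 1)) atTop (𝓝 (2 ^ β)) := by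
    refine (hf 2 two_pos).congr' ?_
    filter_upwards [eventually_ge_atTop 1] with t ht
    rw [max_eq_left ht, max_eq_left (by linarith)]
  have h2 : (2 : ℝ) ^ β ≠ 1 := (Real.one_lt_rpow one_lt_two hβ).ne'
  exact (hg.tendsto_atTop_of_tendsto_div ⟨1, by simpa using hpos 1 one_pos⟩ two_pos h2
    hratio).congr' hfg

theorem IsRegularlyVarying.tendsto_div_natCast_mul {f : ℝ → ℝ} {β : ℝ}
    (hf : IsRegularlyVarying f β) {p q : ℕ} (hp : 0 < p) (hq : 0 < q) :
    Tendsto (fun k : ℕ => f ↑(p * k) / f ↑(q * k)) atTop (𝓝 (((p : ℝ) / q) ^ β)) := by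
  have hqk : Tendsto (fun k : ℕ => ((q * k : ℕ) : ℝ)) atTop atTop :=
    tendsto_natCast_atTop_atTop.comp (tendsto_id.const_mul_atTop' hq)
  refine ((hf _ (by positivity)).comp hqk).congr fun k => ?_
  have hq' : (q : ℝ) ≠ 0 := by positivity
  simp only [Function.comp_apply, Nat.cast_mul]
  rw [mul_comm (q : ℝ), mul_assoc, mul_div_cancel₀ _ hq', mul_comm]

theorem eventually_floor_mul_le_floor_mul {ι : Type*} {l : Filter ι} {B B' : ι → ℝ}
    {c X X' : ℝ} (hB : ∀ᶠ k in l, 0 < B k) (hlim : Tendsto (fun k => B' k / B k) l (𝓝 c))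
    (hX' : 0 < X') (hX : X < c * X') : ∀ᶠ k in l, ⌊B k * X⌋₊ ≤ ⌊B' k * X'⌋₊ := by
  filter_upwards [hB, hlim.eventually (eventually_gt_nhds ((div_lt_iff₀ hX').2 hX))]
    with k hk hlt
  exact Nat.floor_le_floor (by linarith [(div_lt_div_iff₀ hX' hk).1 hlt])

theorem mul_le_of_tendsto_div_of_eventually_le {ι : Type*} {l : Filter ι} [l.NeBot]
    {a b G H : ι → ℝ} {A B c : ℝ} (hab : ∀ᶠ k in l, a k ≤ b k) (hG : ∀ᶠ k in l, 0 < G k)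
    (hH : ∀ᶠ k in l, H k ≠ 0) (ha : Tendsto (fun k => a k / H k) l (𝓝 A))
    (hb : Tendsto (fun k => b k / G k) l (𝓝 B)) (hHG : Tendsto (fun k => H k / G k) l (𝓝 c)) :
    A * c ≤ B := by
  refine le_of_tendsto_of_tendsto (ha.mul hHG) hb ?_
  filter_upwards [hab, hG, hH] with k hk hGk hHk
  rw [div_mul_div_cancel₀ hHk]
  exact div_le_div_of_nonneg_right hk hGk.le

theorem le_of_forall_natCast_div_gt {g : ℝ → ℝ} {r B : ℝ} (hr : 0 ≤ r) (hg : ContinuousAt g r)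
    (h : ∀ p q : ℕ, 0 < q → r < p / q → g (p / q) ≤ B) : g r ≤ B := by
  by_contra! hlt
  obtain ⟨ε, hε, hball⟩ := Metric.eventually_nhds_iff.1 (hg.eventually (lt_mem_nhds hlt))
  obtain ⟨q, hrq, hqε⟩ := exists_rat_btwn (lt_add_of_pos_right r hε)
  have hnum : 0 ≤ q.num := Rat.num_nonneg.2 (by exact_mod_cast hr.trans hrq.le)
  have hq : (q : ℝ) = (q.num.toNat : ℕ) / (q.den : ℕ) := by
    rw [Rat.cast_def, ← Int.toNat_of_nonneg hnum]
    rfl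
  rw [hq] at hrq hqε
  refine (h _ _ q.pos hrq).not_gt (hball ?_)
  rw [Real.dist_eq, abs_of_pos (sub_pos.2 hrq)]
  linarith

section Scaling

variable {u : ℕ → ℕ → ℝ} {b₁ b₂ h : ℝ → ℝ} {β₁ β₂ ρ : ℝ} {lam : ℝ → ℝ → ℝ}

theorem natCast_div_rpow_mul_le
    (hu : ∃ N : ℕ, ∀ i i' j j' : ℕ, N ≤ i → N ≤ j → i ≤ i' → j ≤ j' → u i' j' ≤ u i j)
    (hb₁ : Tendsto b₁ atTop atTop) (hb₂ : Tendsto b₂ atTop atTop)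
    (hb₁RV : IsRegularlyVarying b₁ β₁) (hb₂RV : IsRegularlyVarying b₂ β₂)
    (hpos : ∀ᶠ t in atTop, 0 < h t) (hRV : IsRegularlyVarying h ρ)
    (hlim : ∀ x y : ℝ, 0 < x → 0 < y →
      Tendsto (fun n : ℕ => u ⌊b₁ n * x⌋₊ ⌊b₂ n * y⌋₊ / h n) atTop (𝓝 (lam x y)))
    {p q : ℕ} (hp : 0 < p) (hq : 0 < q) {X Y X' Y' : ℝ} (hX : 0 < X) (hY : 0 < Y)
    (hX' : 0 < X') (hY' : 0 < Y') (hXX' : X < ((p : ℝ) / q) ^ β₁ * X')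
    (hYY' : Y < ((p : ℝ) / q) ^ β₂ * Y') :
    ((p : ℝ) / q) ^ ρ * lam X' Y' ≤ lam X Y := by
  obtain ⟨N, hN⟩ := hu
  have hpk : Tendsto (fun k : ℕ => p * k) atTop atTop := tendsto_id.const_mul_atTop' hp
  have hqk : Tendsto (fun k : ℕ => q * k) atTop atTop := tendsto_id.const_mul_atTop' hq
  have hpkR : Tendsto (fun k : ℕ => ((p * k : ℕ) : ℝ)) atTop atTop :=
    tendsto_natCast_atTop_atTop.comp hpk
  have hqkR : Tendsto (fun k : ℕ => ((q * k : ℕ) : ℝ)) atTop atTop :=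
    tendsto_natCast_atTop_atTop.comp hqk
  have hfloor : ∀ {b : ℝ → ℝ}, Tendsto b atTop atTop → ∀ {Z : ℝ}, 0 < Z →
      ∀ᶠ k : ℕ in atTop, N ≤ ⌊b ↑(q * k) * Z⌋₊ := fun hb _ hZ =>
    (tendsto_nat_floor_atTop.comp ((hb.comp hqkR).atTop_mul_const hZ)).eventually_ge_atTop N
  have hdom : ∀ᶠ k : ℕ in atTop, u ⌊b₁ ↑(p * k) * X'⌋₊ ⌊b₂ ↑(p * k) * Y'⌋₊ ≤
      u ⌊b₁ ↑(q * k) * X⌋₊ ⌊b₂ ↑(q * k) * Y⌋₊ := by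
    filter_upwards [hfloor hb₁ hX, hfloor hb₂ hY,
      eventually_floor_mul_le_floor_mul ((hb₁.comp hqkR).eventually_gt_atTop 0)
        (hb₁RV.tendsto_div_natCast_mul hp hq) hX' hXX',
      eventually_floor_mul_le_floor_mul ((hb₂.comp hqkR).eventually_gt_atTop 0)
        (hb₂RV.tendsto_div_natCast_mul hp hq) hY' hYY'] with k hi hj hii' hjj'
    exact hN _ _ _ _ hi hj hii' hjj'
  rw [mul_comm]
  exact mul_le_of_tendsto_div_of_eventually_le hdom (hqkR.eventually (p := (0 < h ·)) hpos)
    ((hpkR.eventually (p := (0 < h ·)) hpos).mono fun _ hk => hk.ne')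
    ((hlim X' Y' hX' hY').comp hpk) ((hlim X Y hX hY).comp hqk)
    (hRV.tendsto_div_natCast_mul hp hq)

theorem rpow_mul_le_of_le_rpow_mul
    (hu : ∃ N : ℕ, ∀ i i' j j' : ℕ, N ≤ i → N ≤ j → i ≤ i' → j ≤ j' → u i' j' ≤ u i j)
    (hb₁ : Tendsto b₁ atTop atTop) (hb₂ : Tendsto b₂ atTop atTop)
    (hb₁RV : IsRegularlyVarying b₁ β₁) (hb₂RV : IsRegularlyVarying b₂ β₂)
    (hβ₁ : 0 < β₁) (hβ₂ : 0 < β₂)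
    (hpos : ∀ᶠ t in atTop, 0 < h t) (hRV : IsRegularlyVarying h ρ)
    (hlim : ∀ x y : ℝ, 0 < x → 0 < y →
      Tendsto (fun n : ℕ => u ⌊b₁ n * x⌋₊ ⌊b₂ n * y⌋₊ / h n) atTop (𝓝 (lam x y)))
    ⦃r X Y X' Y' : ℝ⦄ (hr : 0 < r) (hX : 0 < X) (hY : 0 < Y) (hX' : 0 < X') (hY' : 0 < Y')
    (hXX' : X ≤ r ^ β₁ * X') (hYY' : Y ≤ r ^ β₂ * Y') :
    r ^ ρ * lam X' Y' ≤ lam X Y := by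
  refine le_of_forall_natCast_div_gt (g := fun t => t ^ ρ * lam X' Y') hr.le
    ((Real.continuousAt_rpow_const r ρ (Or.inl hr.ne')).mul continuousAt_const)
    fun p q hq hrpq => ?_
  have hpq : (0 : ℝ) < p / q := hr.trans hrpq
  have hp : 0 < p := by
    have : (0 : ℝ) < p := (div_pos_iff_of_pos_right (by positivity)).1 hpq
    exact_mod_cast this
  have hlt : ∀ {β Z Z' : ℝ}, 0 < β → 0 < Z' → Z ≤ r ^ β * Z' → Z < ((p : ℝ) / q) ^ β * Z' :=
    fun hβ hZ' hZ => hZ.trans_lt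
      (mul_lt_mul_of_pos_right (Real.rpow_lt_rpow hr.le hrpq hβ) hZ')
  exact natCast_div_rpow_mul_le hu hb₁ hb₂ hb₁RV hb₂RV hpos hRV hlim hp hq hX hY hX' hY'
    (hlt hβ₁ hX' hXX') (hlt hβ₂ hY' hYY')

end Scaling

theorem stmt_2_general
    (u : ℕ → ℕ → ℝ)
    (hu_dec : ∃ N : ℕ, ∀ i i' j j' : ℕ, N ≤ i → N ≤ j → i ≤ i' → j ≤ j' →
      u i' j' ≤ u i j)
    (α₁ α₂ : ℝ) (hα₁ : 0 < α₁) (hα₂ : 0 < α₂)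
    (b₁ b₂ : ℝ → ℝ)
    (hb₁pos : ∀ t : ℝ, 0 < t → 0 < b₁ t) (hb₂pos : ∀ t : ℝ, 0 < t → 0 < b₂ t)
    (hb₁mono : StrictMonoOn b₁ (Set.Ioi (0 : ℝ)))
    (hb₂mono : StrictMonoOn b₂ (Set.Ioi (0 : ℝ)))
    (hb₁RV : ∀ x : ℝ, 0 < x →
      Tendsto (fun t : ℝ => b₁ (t * x) / b₁ t) atTop (𝓝 (x ^ (1 / α₁))))
    (hb₂RV : ∀ x : ℝ, 0 < x →
      Tendsto (fun t : ℝ => b₂ (t * x) / b₂ t) atTop (𝓝 (x ^ (1 / α₂))))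
    (h : ℝ → ℝ) (hpos : ∀ t : ℝ, 0 < t → 0 < h t)
    (ρ : ℝ)
    (hRV : ∀ x : ℝ, 0 < x →
      Tendsto (fun t : ℝ => h (t * x) / h t) atTop (𝓝 (x ^ ρ)))
    (lam : ℝ → ℝ → ℝ)
    (hlim : ∀ x y : ℝ, 0 < x → 0 < y →
      Tendsto (fun n : ℕ => u ⌊b₁ n * x⌋₊ ⌊b₂ n * y⌋₊ / h n) atTop
        (𝓝 (lam x y))) :
    ∀ s x y : ℝ, 0 < s → 0 < x → 0 < y →
      lam (s ^ (1 / α₁) * x) (s ^ (1 / α₂) * y) = s ^ ρ * lam x y := by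
  intro s x y hs hx hy
  have hβ₁ : 0 < 1 / α₁ := one_div_pos.2 hα₁
  have hβ₂ : 0 < 1 / α₂ := one_div_pos.2 hα₂
  have hscale := rpow_mul_le_of_le_rpow_mul hu_dec
    (IsRegularlyVarying.tendsto_atTop hb₁RV hβ₁ hb₁mono.monotoneOn hb₁pos)
    (IsRegularlyVarying.tendsto_atTop hb₂RV hβ₂ hb₂mono.monotoneOn hb₂pos)
    hb₁RV hb₂RV hβ₁ hβ₂ ((eventually_gt_atTop 0).mono hpos) hRV hlim
  have hinv : ∀ β z : ℝ, (s⁻¹) ^ β * (s ^ β * z) = z := fun β z => by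
    rw [Real.inv_rpow hs.le, ← mul_assoc, inv_mul_cancel₀ (by positivity), one_mul]
  refine le_antisymm ?_ (hscale hs (by positivity) (by positivity) hx hy le_rfl le_rfl)
  have hle := hscale (X' := s ^ (1 / α₁) * x) (Y' := s ^ (1 / α₂) * y) (inv_pos.2 hs) hx hy
    (by positivity) (by positivity) (hinv _ _).ge (hinv _ _).ge
  rwa [Real.inv_rpow hs.le, inv_mul_le_iff₀ (by positivity)] at hle

/-- non-standard case scaling property of the limit function:
`λ(s^{1/α₁} x, s^{1/α₂} y) = s^ρ λ(x, y)` for all `s, x, y > 0`. -/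
theorem stmt_2
    (u : ℕ → ℕ → ℝ) (hu_nonneg : ∀ i j, 0 ≤ u i j)
    (hu_dec : ∃ N : ℕ, ∀ i i' j j' : ℕ, N ≤ i → N ≤ j → i ≤ i' → j ≤ j' →
      u i' j' ≤ u i j)
    (α₁ α₂ : ℝ) (hα₁ : 0 < α₁) (hα₂ : 0 < α₂)
    (b₁ b₂ : ℝ → ℝ)
    (hb₁pos : ∀ t : ℝ, 0 < t → 0 < b₁ t) (hb₂pos : ∀ t : ℝ, 0 < t → 0 < b₂ t)
    (hb₁mono : StrictMonoOn b₁ (Set.Ioi (0 : ℝ)))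
    (hb₂mono : StrictMonoOn b₂ (Set.Ioi (0 : ℝ)))
    (hb₁RV : ∀ x : ℝ, 0 < x →
      Tendsto (fun t : ℝ => b₁ (t * x) / b₁ t) atTop (𝓝 (x ^ (1 / α₁))))
    (hb₂RV : ∀ x : ℝ, 0 < x →
      Tendsto (fun t : ℝ => b₂ (t * x) / b₂ t) atTop (𝓝 (x ^ (1 / α₂))))
    (h : ℝ → ℝ) (hpos : ∀ t : ℝ, 0 < t → 0 < h t)
    (ρ : ℝ) (hρ : ρ < 0)
    (hRV : ∀ x : ℝ, 0 < x →
      Tendsto (fun t : ℝ => h (t * x) / h t) atTop (𝓝 (x ^ ρ)))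
    (lam : ℝ → ℝ → ℝ) (hlam : ∀ x y : ℝ, 0 < x → 0 < y → 0 < lam x y)
    (hlim : ∀ x y : ℝ, 0 < x → 0 < y →
      Tendsto (fun n : ℕ => u ⌊b₁ n * x⌋₊ ⌊b₂ n * y⌋₊ / h n) atTop
        (𝓝 (lam x y))) :
    ∀ s x y : ℝ, 0 < s → 0 < x → 0 < y →
      lam (s ^ (1 / α₁) * x) (s ^ (1 / α₂) * y) = s ^ ρ * lam x y :=
  stmt_2_general u hu_dec α₁ α₂ hα₁ hα₂ b₁ b₂ hb₁pos hb₂pos hb₁mono hb₂mono hb₁RV hb₂RV h hpos ρ hRV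
    lam hlim
end

section
/- Fix λ > 0, μ > 0 and c₁ ∈ (0,1), and define q : Z_+^2 → R_+ by q(i,j) = (Γ(1+1/c₁+λ+μ)/(c₁ Γ(λ+1) Γ(μ))) · (Γ(i+λ+1)/Γ(i+1)) · (Γ(j+μ)/Γ(j+1)) / (Γ(i+j+1/c₁+λ+μ+2)/Γ(i+j+1)). Then for all x, y > 0, lim_{n→∞} q(⌊n x⌋, ⌊n y⌋) / n^{-(2+1/c₁)} = (Γ(1+1/c₁+λ+μ)/(c₁ Γ(λ+1) Γ(μ))) · x^λ y^{μ-1} / (x+y)^{1+λ+μ+1/c₁}. -/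
open Real Filter Topology

/-!
Log-convexity of `Γ` gives Wendel's inequalities: for `0 < s < 1` the ratio
`Γ(x + s) / (Γ(x) x^s)` lies between `(x / (x + s))^(1 - s)` and `1`, so it tends to `1`
as `x → ∞`, and `Γ(x + 1) = x Γ(x)` extends this to every `s ≥ 0`. Hence each Gamma quotient
in `q(i, j)` is asymptotically a power, so `q(i, j)` is asymptotic to the prefactor times
`(i+1)^λ j^(μ-1) / (i+j+1)^(1+λ+μ+1/c₁)`, and at `i = ⌊n x⌋, j = ⌊n y⌋` the powers of `n` collect to `n^(-(2 + 1/c₁))`.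
-/

theorem Real.Gamma_add_le_Gamma_mul_rpow {s x : ℝ} (hs0 : 0 < s) (hs1 : s < 1) (hx : 0 < x) :
    Gamma (x + s) ≤ Gamma x * x ^ s := by
  have h := Gamma_mul_add_mul_le_rpow_Gamma_mul_rpow_Gamma hx
    (by linarith : (0 : ℝ) < x + 1) (by linarith : (0 : ℝ) < 1 - s) hs0 (by ring)
  rw [show (1 - s) * x + s * (x + 1) = x + s by ring] at h
  have hG := Gamma_pos_of_pos hx
  calc Gamma (x + s) ≤ Gamma x ^ (1 - s) * Gamma (x + 1) ^ s := h
    _ = Gamma x ^ (1 - s) * Gamma x ^ s * x ^ s := by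
      rw [Gamma_add_one hx.ne', mul_rpow hx.le hG.le]; ring
    _ = Gamma x * x ^ s := by rw [← rpow_add hG, sub_add_cancel, rpow_one]

theorem Real.Gamma_mul_self_le_Gamma_add_mul_rpow {s x : ℝ} (hs0 : 0 < s) (hs1 : s < 1)
    (hx : 0 < x) : Gamma x * x ≤ Gamma (x + s) * (x + s) ^ (1 - s) := by
  have hxs : 0 < x + s := by linarith
  have h := Gamma_mul_add_mul_le_rpow_Gamma_mul_rpow_Gamma hxs
    (by linarith : (0 : ℝ) < x + s + 1) hs0 (by linarith : (0 : ℝ) < 1 - s) (by ring)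
  rw [show s * (x + s) + (1 - s) * (x + s + 1) = x + 1 by ring] at h
  have hG := Gamma_pos_of_pos hxs
  calc Gamma x * x = Gamma (x + 1) := by rw [Gamma_add_one hx.ne']; ring
    _ ≤ Gamma (x + s) ^ s * Gamma (x + s + 1) ^ (1 - s) := h
    _ = Gamma (x + s) ^ s * Gamma (x + s) ^ (1 - s) * (x + s) ^ (1 - s) := by
      rw [Gamma_add_one hxs.ne', mul_rpow hxs.le hG.le]; ring
    _ = Gamma (x + s) * (x + s) ^ (1 - s) := by rw [← rpow_add hG, add_sub_cancel, rpow_one]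

noncomputable def gammaRatio (s x : ℝ) : ℝ := Gamma (x + s) / (Gamma x * x ^ s)

lemma Gamma_add_div_Gamma_eq_gammaRatio_mul {s x : ℝ} (hx : 0 < x) :
    Gamma (x + s) / Gamma x = gammaRatio s x * x ^ s := by
  have := rpow_pos_of_pos hx s
  rw [gammaRatio]
  field_simp

lemma gammaRatio_zero {x : ℝ} (hx : 0 < x) : gammaRatio 0 x = 1 := by
  simp [gammaRatio, (Gamma_pos_of_pos hx).ne']

lemma gammaRatio_le_one {s x : ℝ} (hs0 : 0 < s) (hs1 : s < 1) (hx : 0 < x) :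
    gammaRatio s x ≤ 1 :=
  div_le_one (mul_pos (Gamma_pos_of_pos hx) (rpow_pos_of_pos hx s)) |>.mpr
    (Gamma_add_le_Gamma_mul_rpow hs0 hs1 hx)

lemma div_add_rpow_le_gammaRatio {s x : ℝ} (hs0 : 0 < s) (hs1 : s < 1) (hx : 0 < x) :
    (x / (x + s)) ^ (1 - s) ≤ gammaRatio s x := by
  have hxs : 0 < x + s := by linarith
  rw [gammaRatio, div_rpow hx.le hxs.le, div_le_div_iff₀ (rpow_pos_of_pos hxs _)
    (mul_pos (Gamma_pos_of_pos hx) (rpow_pos_of_pos hx _))]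
  calc x ^ (1 - s) * (Gamma x * x ^ s) = Gamma x * x := by
        rw [mul_left_comm, ← rpow_add hx, sub_add_cancel, rpow_one]
    _ ≤ Gamma (x + s) * (x + s) ^ (1 - s) := Gamma_mul_self_le_Gamma_add_mul_rpow hs0 hs1 hx

lemma gammaRatio_add_one {s x : ℝ} (hx : 0 < x) (hs : 0 ≤ s) :
    gammaRatio (s + 1) x = gammaRatio s x * ((x + s) / x) := by
  have := Gamma_pos_of_pos hx
  have := rpow_pos_of_pos hx s
  rw [gammaRatio, gammaRatio, ← add_assoc, Gamma_add_one (by positivity), rpow_add_one hx.ne']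
  field_simp

lemma tendsto_add_const_div_self_atTop (s : ℝ) :
    Tendsto (fun x : ℝ => (x + s) / x) atTop (𝓝 1) := by
  have h : Tendsto (fun x : ℝ => 1 + s / x) atTop (𝓝 (1 + 0)) :=
    tendsto_const_nhds.add (tendsto_const_nhds.div_atTop tendsto_id)
  rw [add_zero] at h
  refine h.congr' ?_
  filter_upwards [eventually_gt_atTop 0] with x hx
  field_simp

lemma tendsto_gammaRatio_atTop_of_lt_one {s : ℝ} (hs0 : 0 ≤ s) (hs1 : s < 1) :
    Tendsto (gammaRatio s) atTop (𝓝 1) := by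
  rcases hs0.eq_or_lt with rfl | hs0
  · refine tendsto_const_nhds.congr' ?_
    filter_upwards [eventually_gt_atTop 0] with x hx
    rw [gammaRatio_zero hx]
  have hlow : Tendsto (fun x : ℝ => (x / (x + s)) ^ (1 - s)) atTop (𝓝 1) := by
    have h := ((tendsto_add_const_div_self_atTop s).inv₀ one_ne_zero).rpow_const
      (Or.inl (inv_ne_zero one_ne_zero) : (1 : ℝ)⁻¹ ≠ 0 ∨ 0 ≤ 1 - s)
    simpa only [inv_div, inv_one, one_rpow] using h
  refine tendsto_of_tendsto_of_tendsto_of_le_of_le' hlow tendsto_const_nhds ?_ ?_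
  · filter_upwards [eventually_gt_atTop 0] with x hx
    exact div_add_rpow_le_gammaRatio hs0 hs1 hx
  · filter_upwards [eventually_gt_atTop 0] with x hx
    exact gammaRatio_le_one hs0 hs1 hx

lemma tendsto_gammaRatio_add_one {s : ℝ} (hs : 0 ≤ s)
    (h : Tendsto (gammaRatio s) atTop (𝓝 1)) :
    Tendsto (gammaRatio (s + 1)) atTop (𝓝 1) := by
  have := h.mul (tendsto_add_const_div_self_atTop s)
  rw [mul_one] at this
  refine this.congr' ?_
  filter_upwards [eventually_gt_atTop 0] with x hx
  rw [gammaRatio_add_one hx hs]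

theorem tendsto_gammaRatio_atTop {s : ℝ} (hs : 0 ≤ s) :
    Tendsto (gammaRatio s) atTop (𝓝 1) := by
  obtain ⟨n, t, ht0, ht1, rfl⟩ : ∃ n : ℕ, ∃ t, 0 ≤ t ∧ t < 1 ∧ s = t + n :=
    ⟨⌊s⌋₊, s - ⌊s⌋₊, sub_nonneg.mpr (Nat.floor_le hs),
      by linarith [Nat.lt_floor_add_one s], by ring⟩
  clear hs
  induction n with
  | zero => simpa using tendsto_gammaRatio_atTop_of_lt_one ht0 ht1
  | succ n ih =>
    rw [Nat.cast_succ, ← add_assoc]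
    exact tendsto_gammaRatio_add_one (by positivity) ih

lemma Gamma_quotient_div_rpow_eq {lam mu κ i j n : ℝ} (hi : 0 ≤ i) (hj : 0 < j) (hn : 0 < n) :
    Gamma (i + lam + 1) / Gamma (i + 1) * (Gamma (j + mu) / Gamma (j + 1)) /
        (Gamma (i + j + κ + lam + mu + 2) / Gamma (i + j + 1)) / n ^ (-(2 + κ)) =
      gammaRatio lam (i + 1) * gammaRatio mu j / gammaRatio (1 + lam + mu + κ) (i + j + 1) *
        (((i + 1) / n) ^ lam * (j / n) ^ (mu - 1) /
          ((i + j + 1) / n) ^ (1 + lam + mu + κ)) := by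
  have hi1 : 0 < i + 1 := by linarith
  have hw : 0 < i + j + 1 := by linarith
  have hpow : ((i + 1) / n) ^ lam * (j / n) ^ (mu - 1) / ((i + j + 1) / n) ^ (1 + lam + mu + κ) =
      (i + 1) ^ lam * (j ^ mu / j) / (i + j + 1) ^ (1 + lam + mu + κ) / n ^ (-(2 + κ)) := by
    have hn_pow : n ^ (-(2 + κ)) = n ^ lam * n ^ (mu - 1) / n ^ (1 + lam + mu + κ) := by
      rw [← rpow_add hn, ← rpow_sub hn]
      ring_nf
    rw [div_rpow hi1.le hn.le, div_rpow hj.le hn.le, div_rpow hw.le hn.le, rpow_sub_one hj.ne',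
      hn_pow]
    have := rpow_pos_of_pos hn lam
    have := rpow_pos_of_pos hn (mu - 1)
    have := rpow_pos_of_pos hn (1 + lam + mu + κ)
    field_simp
  rw [hpow, show i + lam + 1 = (i + 1) + lam by ring,
    show i + j + κ + lam + mu + 2 = (i + j + 1) + (1 + lam + mu + κ) by ring,
    Gamma_add_one hj.ne', mul_comm j, ← div_div, Gamma_add_div_Gamma_eq_gammaRatio_mul hi1,
    Gamma_add_div_Gamma_eq_gammaRatio_mul hj, Gamma_add_div_Gamma_eq_gammaRatio_mul hw]
  ring
lemma tendsto_atTop_of_tendsto_div_natCast {f : ℕ → ℝ} {x : ℝ} (hx : 0 < x)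
    (h : Tendsto (fun n => f n / n) atTop (𝓝 x)) : Tendsto f atTop atTop := by
  refine (h.pos_mul_atTop hx tendsto_natCast_atTop_atTop).congr' ?_
  filter_upwards [eventually_gt_atTop 0] with n hn
  field_simp

lemma tendsto_add_const_div_natCast {f : ℕ → ℝ} {x : ℝ} (c : ℝ)
    (h : Tendsto (fun n => f n / n) atTop (𝓝 x)) :
    Tendsto (fun n => (f n + c) / n) atTop (𝓝 x) := by
  simpa only [add_div, add_zero] using h.add (tendsto_const_div_atTop_nhds_zero_nat c)

lemma tendsto_Gamma_quotient_div_rpow {lam mu κ x y : ℝ} (hlam : 0 ≤ lam) (hmu : 0 ≤ mu)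
    (hκ : 0 ≤ κ) (hx : 0 < x) (hy : 0 < y) {i j : ℕ → ℝ}
    (hi : Tendsto (fun n => i n / n) atTop (𝓝 x)) (hj : Tendsto (fun n => j n / n) atTop (𝓝 y)) :
    Tendsto (fun n : ℕ => Gamma (i n + lam + 1) / Gamma (i n + 1) *
        (Gamma (j n + mu) / Gamma (j n + 1)) /
        (Gamma (i n + j n + κ + lam + mu + 2) / Gamma (i n + j n + 1)) / (n : ℝ) ^ (-(2 + κ)))
      atTop (𝓝 (x ^ lam * y ^ (mu - 1) / (x + y) ^ (1 + lam + mu + κ))) := by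
  set b := 1 + lam + mu + κ
  have hi_top := tendsto_atTop_of_tendsto_div_natCast hx hi
  have hj_top := tendsto_atTop_of_tendsto_div_natCast hy hj
  have hij : Tendsto (fun n => (i n + j n) / n) atTop (𝓝 (x + y)) := by
    simpa only [add_div] using hi.add hj
  have hratios : Tendsto (fun n => gammaRatio lam (i n + 1) * gammaRatio mu (j n) /
      gammaRatio b (i n + j n + 1)) atTop (𝓝 1) := by
    simpa only [mul_one, div_one, Function.comp_def, Pi.div_def] using (((tendsto_gammaRatio_atTop hlam).comp (tendsto_atTop_add_const_right _ 1 hi_top)).mul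
      ((tendsto_gammaRatio_atTop hmu).comp hj_top)).div
      ((tendsto_gammaRatio_atTop (by positivity)).comp
        (tendsto_atTop_add_const_right _ 1 (hi_top.atTop_add_atTop hj_top))) one_ne_zero
  have hpowers : Tendsto (fun n : ℕ => ((i n + 1) / n) ^ lam * (j n / n) ^ (mu - 1) /
      ((i n + j n + 1) / n) ^ b) atTop (𝓝 (x ^ lam * y ^ (mu - 1) / (x + y) ^ b)) :=
    (((tendsto_add_const_div_natCast 1 hi).rpow_const (Or.inl hx.ne')).mul
      (hj.rpow_const (Or.inl hy.ne'))).div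
      ((tendsto_add_const_div_natCast 1 hij).rpow_const (Or.inl (add_pos hx hy).ne'))
      (rpow_pos_of_pos (add_pos hx hy) b).ne'
  rw [← one_mul (x ^ lam * y ^ (mu - 1) / (x + y) ^ b)]
  refine (hratios.mul hpowers).congr' ?_
  filter_upwards [hi_top.eventually_ge_atTop 0, hj_top.eventually_gt_atTop 0,
    eventually_gt_atTop 0] with n hi0 hj0 hn
  exact (Gamma_quotient_div_rpow_eq hi0 hj0 (Nat.cast_pos.mpr hn)).symm

/-- the Gamma-ratio pmf `q(i,j)` of the standard preferential
attachment case is regularly varying: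
`q(⌊n x⌋,⌊n y⌋)/n^{-(2+1/c₁)} → C x^λ y^{μ-1}/(x+y)^{1+λ+μ+1/c₁}`. -/
theorem stmt_7
    (lam mu c₁ : ℝ) (hlam : 0 < lam) (hmu : 0 < mu)
    (hc₁ : c₁ ∈ Set.Ioo (0 : ℝ) 1)
    (q : ℕ → ℕ → ℝ)
    (hq : ∀ i j : ℕ, q i j =
      (Gamma (1 + 1 / c₁ + lam + mu) / (c₁ * Gamma (lam + 1) * Gamma mu)) *
        ((Gamma ((i : ℝ) + lam + 1) / Gamma ((i : ℝ) + 1)) *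
          (Gamma ((j : ℝ) + mu) / Gamma ((j : ℝ) + 1)) /
          (Gamma ((i : ℝ) + (j : ℝ) + 1 / c₁ + lam + mu + 2) /
            Gamma ((i : ℝ) + (j : ℝ) + 1)))) :
    ∀ x y : ℝ, 0 < x → 0 < y →
      Tendsto
        (fun n : ℕ => q ⌊(n : ℝ) * x⌋₊ ⌊(n : ℝ) * y⌋₊ /
          (n : ℝ) ^ (-(2 + 1 / c₁)))
        atTop
        (𝓝 ((Gamma (1 + 1 / c₁ + lam + mu) /
              (c₁ * Gamma (lam + 1) * Gamma mu)) *
            (x ^ lam * y ^ (mu - 1) / (x + y) ^ (1 + lam + mu + 1 / c₁)))) := by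
  intro x y hx hy
  have floor_scaled (z : ℝ) (hz : 0 ≤ z) :
      Tendsto (fun n : ℕ => (⌊(n : ℝ) * z⌋₊ : ℝ) / n) atTop (𝓝 z) := by
    simpa only [Function.comp_def, mul_comm z] using
      (tendsto_nat_floor_mul_div_atTop hz).comp tendsto_natCast_atTop_atTop
  refine ((tendsto_Gamma_quotient_div_rpow hlam.le hmu.le (one_div_pos.mpr hc₁.1).le hx hy
    (floor_scaled x hx.le) (floor_scaled y hy.le)).const_mul _).congr fun n => ?_
  rw [hq, mul_div_assoc _ _ ((n : ℝ) ^ (-(2 + 1 / c₁)))]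
end

section
/- Fix a norm ‖·‖ on R² and let ℵ₀ = {v ∈ R_+² : ‖v‖ = 1}. Let h : (0,∞) → (0,∞) be regularly varying with index ρ < 0 and let u : Z_+² → R_+ satisfy: there exists λ₀ > 0 on ℵ₀ with lim_{t→∞} u(⌊t x⌋, ⌊t y⌋)/h(t) = λ₀(x,y) for all (x,y) ∈ ℵ₀. Then u is regularly varying on all of the positive quadrant: for all x,y > 0, lim_{n→∞} u(⌊n x⌋, ⌊n y⌋)/h(n) = λ(x,y) := λ₀((x,y)/‖(x,y)‖) · ‖(x,y)‖^ρ > 0. -/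
open Filter Topology

/-! Write `(x, y) = r • (x / r, y / r)` with `r = N (x, y)`, so that `(x / r, y / r)` lies on the
unit sphere. Along `t = n r` the hypothesis on the sphere gives `u ⌊n x⌋ ⌊n y⌋ / h (n r) → λ₀`,
and regular variation of `h` gives `h (n r) / h n → r ^ ρ`; multiplying the two limits yields
`λ₀ (x / r, y / r) · r ^ ρ`. -/

theorem Seminorm.apply_pos_of_ne_zero {𝕜 E : Type*} [SeminormedRing 𝕜] [AddGroup E] [SMul 𝕜 E]
    (N : Seminorm 𝕜 E) (hN : ∀ v, N v = 0 → v = 0) {v : E}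
    (hv : v ≠ 0) : 0 < N v :=
  (apply_nonneg N v).lt_of_ne fun h => hv (hN v h.symm)

theorem Seminorm.apply_inv_smul_self {E : Type*} [AddCommGroup E] [Module ℝ E]
    (N : Seminorm ℝ E) {v : E} (hv : 0 < N v) : N ((N v)⁻¹ • v) = 1 := by
  rw [map_smul_eq_mul, Real.norm_eq_abs, abs_of_pos (inv_pos.mpr hv), inv_mul_cancel₀ hv.ne']

theorem tendsto_comp_mul_const_div {g h : ℝ → ℝ} {c L M : ℝ} (hc : 0 < c)
    (hh : ∀ᶠ t in atTop, h t ≠ 0)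
    (hg : Tendsto (fun t => g t / h t) atTop (𝓝 L))
    (hratio : Tendsto (fun t => h (t * c) / h t) atTop (𝓝 M)) :
    Tendsto (fun t => g (t * c) / h t) atTop (𝓝 (L * M)) := by
  have hscale : Tendsto (fun t : ℝ => t * c) atTop atTop := tendsto_id.atTop_mul_const hc
  refine ((hg.comp hscale).mul hratio).congr' ?_
  filter_upwards [hscale.eventually hh] with t ht
  simp only [Function.comp_apply]
  rw [div_mul_div_cancel₀ ht]

theorem stmt_10_general
    (N : Seminorm ℝ (ℝ × ℝ)) (hN : ∀ v : ℝ × ℝ, N v = 0 → v = 0)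
    (h : ℝ → ℝ) (hpos : ∀ t : ℝ, 0 < t → 0 < h t)
    (ρ : ℝ)
    (hRV : ∀ x : ℝ, 0 < x →
      Tendsto (fun t : ℝ => h (t * x) / h t) atTop (𝓝 (x ^ ρ)))
    (u : ℕ → ℕ → ℝ)
    (lam₀ : ℝ → ℝ → ℝ)
    (hlam₀ : ∀ x y : ℝ, 0 ≤ x → 0 ≤ y → N (x, y) = 1 → 0 < lam₀ x y)
    (hlim : ∀ x y : ℝ, 0 ≤ x → 0 ≤ y → N (x, y) = 1 →
      Tendsto (fun t : ℝ => u ⌊t * x⌋₊ ⌊t * y⌋₊ / h t) atTop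
        (𝓝 (lam₀ x y))) :
    ∀ x y : ℝ, 0 < x → 0 < y →
      0 < lam₀ (x / N (x, y)) (y / N (x, y)) * (N (x, y) : ℝ) ^ ρ ∧
      Tendsto (fun n : ℕ => u ⌊(n : ℝ) * x⌋₊ ⌊(n : ℝ) * y⌋₊ / h n) atTop
        (𝓝 (lam₀ (x / N (x, y)) (y / N (x, y)) * (N (x, y) : ℝ) ^ ρ)) := by
  intro x y hx hy
  set r := N (x, y)
  have hr : 0 < r := N.apply_pos_of_ne_zero hN (by simp [hx.ne'])
  have hsphere : N (x / r, y / r) = 1 := by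
    simpa [div_eq_inv_mul] using N.apply_inv_smul_self hr
  refine ⟨mul_pos (hlam₀ _ _ (by positivity) (by positivity) hsphere) (Real.rpow_pos_of_pos hr ρ),
    ?_⟩
  have hh : ∀ᶠ t in atTop, h t ≠ 0 :=
    (eventually_gt_atTop 0).mono fun t ht => (hpos t ht).ne'
  refine ((tendsto_comp_mul_const_div hr hh (hlim _ _ (by positivity) (by positivity) hsphere)
    (hRV r hr)).comp tendsto_natCast_atTop_atTop).congr fun n => ?_
  simp only [Function.comp_apply, mul_assoc, mul_div_cancel₀ _ hr.ne']

/-- convergence on the unit sphere implies regular variation on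
the whole positive quadrant.  Here `N` is an arbitrary norm on `ℝ²` (a
seminorm which vanishes only at `0`), `ℵ₀ = {v ∈ ℝ₊² : N v = 1}`. -/
theorem stmt_10
    (N : Seminorm ℝ (ℝ × ℝ)) (hN : ∀ v : ℝ × ℝ, N v = 0 → v = 0)
    (h : ℝ → ℝ) (hpos : ∀ t : ℝ, 0 < t → 0 < h t)
    (ρ : ℝ) (hρ : ρ < 0)
    (hRV : ∀ x : ℝ, 0 < x →
      Tendsto (fun t : ℝ => h (t * x) / h t) atTop (𝓝 (x ^ ρ)))
    (u : ℕ → ℕ → ℝ) (hu_nonneg : ∀ i j, 0 ≤ u i j)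
    (lam₀ : ℝ → ℝ → ℝ)
    (hlam₀ : ∀ x y : ℝ, 0 ≤ x → 0 ≤ y → N (x, y) = 1 → 0 < lam₀ x y)
    (hlim : ∀ x y : ℝ, 0 ≤ x → 0 ≤ y → N (x, y) = 1 →
      Tendsto (fun t : ℝ => u ⌊t * x⌋₊ ⌊t * y⌋₊ / h t) atTop
        (𝓝 (lam₀ x y))) :
    ∀ x y : ℝ, 0 < x → 0 < y →
      0 < lam₀ (x / N (x, y)) (y / N (x, y)) * (N (x, y) : ℝ) ^ ρ ∧
      Tendsto (fun n : ℕ => u ⌊(n : ℝ) * x⌋₊ ⌊(n : ℝ) * y⌋₊ / h n) atTop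
        (𝓝 (lam₀ (x / N (x, y)) (y / N (x, y)) * (N (x, y) : ℝ) ^ ρ)) :=
  stmt_10_general N hN h hpos ρ hRV u lam₀ hlam₀ hlim
end

section
/- Fix a norm ‖·‖ on R², exponents α₁, α₂ > 0, and let E₀ = {(x,y) ∈ R_+² : ‖(x^{α₁}, y^{α₂})‖ = 1}. Let h : (0,∞) → (0,∞) be regularly varying with index ρ < 0 and let u : Z_+² → R_+ satisfy: there exists λ₀ > 0 on E₀ with lim_{t→∞} u(⌊t^{1/α₁} x⌋, ⌊t^{1/α₂} y⌋)/h(t) = λ₀(x,y) for all (x,y) ∈ E₀. Then for all x,y > 0, writing w = w(x,y) := (x^{α₁}, y^{α₂}), one has lim_{n→∞} u(⌊n^{1/α₁} x⌋, ⌊n^{1/α₂} y⌋)/h(n) = λ(x,y) := λ₀(x/‖w‖^{1/α₁}, y/‖w‖^{1/α₂}) · ‖w‖^ρ > 0. -/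
open Filter Topology

/-- non-standard case with power-law scaling `b_i(t) = t^{1/αᵢ}`:
convergence on `E₀ = {(x,y) ∈ ℝ₊² : N(x^{α₁}, y^{α₂}) = 1}` implies regular
variation on the whole positive quadrant, with limit
`λ(x,y) = λ₀(x/‖w‖^{1/α₁}, y/‖w‖^{1/α₂}) ‖w‖^ρ` where `w = (x^{α₁}, y^{α₂})`. -/
theorem stmt_13
    (N : Seminorm ℝ (ℝ × ℝ)) (hN : ∀ v : ℝ × ℝ, N v = 0 → v = 0)
    (α₁ α₂ : ℝ) (hα₁ : 0 < α₁) (hα₂ : 0 < α₂)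
    (h : ℝ → ℝ) (hpos : ∀ t : ℝ, 0 < t → 0 < h t)
    (ρ : ℝ) (hρ : ρ < 0)
    (hRV : ∀ x : ℝ, 0 < x →
      Tendsto (fun t : ℝ => h (t * x) / h t) atTop (𝓝 (x ^ ρ)))
    (u : ℕ → ℕ → ℝ) (hu_nonneg : ∀ i j, 0 ≤ u i j)
    (lam₀ : ℝ → ℝ → ℝ)
    (hlam₀ : ∀ x y : ℝ, 0 ≤ x → 0 ≤ y → N (x ^ α₁, y ^ α₂) = 1 →
      0 < lam₀ x y)
    (hlim : ∀ x y : ℝ, 0 ≤ x → 0 ≤ y → N (x ^ α₁, y ^ α₂) = 1 →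
      Tendsto
        (fun t : ℝ => u ⌊t ^ (1 / α₁) * x⌋₊ ⌊t ^ (1 / α₂) * y⌋₊ / h t)
        atTop (𝓝 (lam₀ x y))) :
    ∀ x y : ℝ, 0 < x → 0 < y →
      0 < lam₀ (x / (N (x ^ α₁, y ^ α₂) : ℝ) ^ (1 / α₁))
            (y / (N (x ^ α₁, y ^ α₂) : ℝ) ^ (1 / α₂)) *
          (N (x ^ α₁, y ^ α₂) : ℝ) ^ ρ ∧
      Tendsto
        (fun n : ℕ =>
          u ⌊(n : ℝ) ^ (1 / α₁) * x⌋₊ ⌊(n : ℝ) ^ (1 / α₂) * y⌋₊ / h n)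
        atTop
        (𝓝 (lam₀ (x / (N (x ^ α₁, y ^ α₂) : ℝ) ^ (1 / α₁))
              (y / (N (x ^ α₁, y ^ α₂) : ℝ) ^ (1 / α₂)) *
            (N (x ^ α₁, y ^ α₂) : ℝ) ^ ρ)) := by
  intro x y hx hy
  set c : ℝ := N (x ^ α₁, y ^ α₂) with hc_def
  have hvne : (x ^ α₁, y ^ α₂) ≠ (0 : ℝ × ℝ) := by
    intro hEq
    have h1 : x ^ α₁ = 0 := congrArg Prod.fst hEq
    exact absurd h1 (ne_of_gt (Real.rpow_pos_of_pos hx α₁))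
  have hc : 0 < c := by
    rcases lt_or_eq_of_le (apply_nonneg N (x ^ α₁, y ^ α₂)) with h' | h'
    · exact h'
    · exact absurd (hN _ h'.symm) hvne
  set x' : ℝ := x / c ^ (1 / α₁) with hx'_def
  set y' : ℝ := y / c ^ (1 / α₂) with hy'_def
  have hcp1 : (0:ℝ) < c ^ (1 / α₁) := Real.rpow_pos_of_pos hc _
  have hcp2 : (0:ℝ) < c ^ (1 / α₂) := Real.rpow_pos_of_pos hc _
  have hx' : 0 < x' := div_pos hx hcp1
  have hy' : 0 < y' := div_pos hy hcp2
  have hx'p : x' ^ α₁ = x ^ α₁ / c := by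
    rw [hx'_def, Real.div_rpow hx.le hcp1.le, ← Real.rpow_mul hc.le,
      one_div_mul_cancel hα₁.ne', Real.rpow_one]
  have hy'p : y' ^ α₂ = y ^ α₂ / c := by
    rw [hy'_def, Real.div_rpow hy.le hcp2.le, ← Real.rpow_mul hc.le]
    rw [one_div_mul_cancel hα₂.ne', Real.rpow_one]
  have hN1 : N (x' ^ α₁, y' ^ α₂) = 1 := by
    have hsm : (x' ^ α₁, y' ^ α₂) = c⁻¹ • ((x ^ α₁ : ℝ), (y ^ α₂ : ℝ)) := by
      rw [hx'p, hy'p, Prod.smul_mk, smul_eq_mul, smul_eq_mul]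
      simp only [Prod.mk.injEq]
      constructor <;> ring
    rw [hsm, map_smul_eq_mul, Real.norm_eq_abs, abs_inv, abs_of_pos hc,
      ← hc_def, inv_mul_cancel₀ hc.ne']
  have hlampos := hlam₀ x' y' hx'.le hy'.le hN1
  refine ⟨mul_pos hlampos (Real.rpow_pos_of_pos hc ρ), ?_⟩
  have hnc : Tendsto (fun n : ℕ => (n : ℝ) * c) atTop atTop :=
    (tendsto_natCast_atTop_atTop (R := ℝ)).atTop_mul_const hc
  have hA : Tendsto
      (fun n : ℕ => u ⌊((n : ℝ) * c) ^ (1 / α₁) * x'⌋₊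
        ⌊((n : ℝ) * c) ^ (1 / α₂) * y'⌋₊ / h ((n : ℝ) * c))
      atTop (𝓝 (lam₀ x' y')) :=
    (hlim x' y' hx'.le hy'.le hN1).comp hnc
  have hB : Tendsto (fun n : ℕ => h ((n : ℝ) * c) / h n) atTop (𝓝 (c ^ ρ)) :=
    (hRV c hc).comp (tendsto_natCast_atTop_atTop (R := ℝ))
  have hprod := hA.mul hB
  refine hprod.congr' ?_
  filter_upwards [eventually_ge_atTop 1] with n hn
  have hn' : (0:ℝ) < (n : ℝ) := by exact_mod_cast hn
  have harg1 : ((n : ℝ) * c) ^ (1 / α₁) * x' = (n : ℝ) ^ (1 / α₁) * x := by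
    rw [Real.mul_rpow hn'.le hc.le, hx'_def]
    field_simp
  have harg2 : ((n : ℝ) * c) ^ (1 / α₂) * y' = (n : ℝ) ^ (1 / α₂) * y := by
    rw [Real.mul_rpow hn'.le hc.le, hy'_def]
    field_simp
  have hh1 : h ((n : ℝ) * c) ≠ 0 := (hpos _ (mul_pos hn' hc)).ne'
  have hh2 : h (n : ℝ) ≠ 0 := (hpos _ hn').ne'
  rw [harg1, harg2]
  field_simp
end

section
/- Fix a norm ‖·‖ on R², exponents α₁, α₂ > 0, and let E₀ = {(x,y) ∈ R_+² : ‖(x^{α₁}, y^{α₂})‖ = 1}. Let h : (0,∞) → (0,∞) be regularly varying with index ρ < 0 and let u : Z_+² → R_+ satisfy lim_{t→∞} u(⌊t^{1/α₁} x⌋, ⌊t^{1/α₂} y⌋)/h(t) = λ₀(x,y) > 0 for all (x,y) ∈ E₀. Then u is embeddable in a non-standard regularly varying function: f(x,y) := u(⌊x⌋,⌊y⌋) satisfies, for all x,y > 0, lim_{t→∞} f(t^{1/α₁} x, t^{1/α₂} y)/h(t) = λ₀(x/‖w‖^{1/α₁}, y/‖w‖^{1/α₂}) · ‖w‖^ρ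 where w = (x^{α₁}, y^{α₂}). Moreover, if the convergence on E₀ is uniform, then lim_{t→∞} sup_{(x,y)∈E₀} |f(t^{1/α₁} x, t^{1/α₂} y)/h(t) − λ₀(x,y)| = 0. -/
open Filter Topology

/-- non-standard embeddability: under convergence on
`E₀ = {(x,y) ∈ ℝ₊² : N(x^{α₁}, y^{α₂}) = 1}`, the embedding
`f(x,y) = u(⌊x⌋,⌊y⌋)` satisfies
`f(t^{1/α₁}x, t^{1/α₂}y)/h(t) → λ₀(x/‖w‖^{1/α₁}, y/‖w‖^{1/α₂}) ‖w‖^ρ`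
for all `x,y > 0`, and if the convergence on `E₀` is uniform then the
convergence of the embedding is uniform on `E₀` as well. -/
theorem stmt_14
    (N : Seminorm ℝ (ℝ × ℝ)) (hN : ∀ v : ℝ × ℝ, N v = 0 → v = 0)
    (α₁ α₂ : ℝ) (hα₁ : 0 < α₁) (hα₂ : 0 < α₂)
    (h : ℝ → ℝ) (hpos : ∀ t : ℝ, 0 < t → 0 < h t)
    (ρ : ℝ) (hρ : ρ < 0)
    (hRV : ∀ x : ℝ, 0 < x →
      Tendsto (fun t : ℝ => h (t * x) / h t) atTop (𝓝 (x ^ ρ)))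
    (u : ℕ → ℕ → ℝ) (hu_nonneg : ∀ i j, 0 ≤ u i j)
    (lam₀ : ℝ → ℝ → ℝ)
    (hlam₀ : ∀ x y : ℝ, 0 ≤ x → 0 ≤ y → N (x ^ α₁, y ^ α₂) = 1 →
      0 < lam₀ x y)
    (hlim : ∀ x y : ℝ, 0 ≤ x → 0 ≤ y → N (x ^ α₁, y ^ α₂) = 1 →
      Tendsto
        (fun t : ℝ => u ⌊t ^ (1 / α₁) * x⌋₊ ⌊t ^ (1 / α₂) * y⌋₊ / h t)
        atTop (𝓝 (lam₀ x y)))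
    (f : ℝ → ℝ → ℝ) (hf : ∀ x y : ℝ, f x y = u ⌊x⌋₊ ⌊y⌋₊) :
    (∀ x y : ℝ, 0 < x → 0 < y →
      Tendsto
        (fun t : ℝ => f (t ^ (1 / α₁) * x) (t ^ (1 / α₂) * y) / h t)
        atTop
        (𝓝 (lam₀ (x / (N (x ^ α₁, y ^ α₂) : ℝ) ^ (1 / α₁))
              (y / (N (x ^ α₁, y ^ α₂) : ℝ) ^ (1 / α₂)) *
            (N (x ^ α₁, y ^ α₂) : ℝ) ^ ρ))) ∧
    (TendstoUniformlyOn
        (fun (t : ℝ) (v : ℝ × ℝ) =>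
          u ⌊t ^ (1 / α₁) * v.1⌋₊ ⌊t ^ (1 / α₂) * v.2⌋₊ / h t)
        (fun v : ℝ × ℝ => lam₀ v.1 v.2) atTop
        {v : ℝ × ℝ | 0 ≤ v.1 ∧ 0 ≤ v.2 ∧ N (v.1 ^ α₁, v.2 ^ α₂) = 1} →
      TendstoUniformlyOn
        (fun (t : ℝ) (v : ℝ × ℝ) =>
          f (t ^ (1 / α₁) * v.1) (t ^ (1 / α₂) * v.2) / h t)
        (fun v : ℝ × ℝ => lam₀ v.1 v.2) atTop
        {v : ℝ × ℝ | 0 ≤ v.1 ∧ 0 ≤ v.2 ∧ N (v.1 ^ α₁, v.2 ^ α₂) = 1}) := by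

  constructor
  · intro x y hx hy
    set c : ℝ := N (x ^ α₁, y ^ α₂) with hcdef
    have hxa : (0:ℝ) < x ^ α₁ := Real.rpow_pos_of_pos hx _
    have hc : 0 < c := by
      rcases lt_or_eq_of_le (apply_nonneg N (x ^ α₁, y ^ α₂)) with h' | h'
      · exact h'
      · exfalso
        have h2 := hN _ h'.symm
        have : x ^ α₁ = 0 := by simpa using congrArg Prod.fst h2
        exact hxa.ne' this
    set x₀ : ℝ := x / c ^ (1/α₁) with hx0
    set y₀ : ℝ := y / c ^ (1/α₂) with hy0
    have hcx : (0:ℝ) < c ^ (1/α₁) := Real.rpow_pos_of_pos hc _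
    have hcy : (0:ℝ) < c ^ (1/α₂) := Real.rpow_pos_of_pos hc _
    have hx₀ : 0 < x₀ := div_pos hx hcx
    have hy₀ : 0 < y₀ := div_pos hy hcy
    have hxp : x₀ ^ α₁ = x ^ α₁ / c := by
      rw [hx0, Real.div_rpow hx.le hcx.le, ← Real.rpow_mul hc.le,
        one_div_mul_cancel hα₁.ne', Real.rpow_one]
    have hyp : y₀ ^ α₂ = y ^ α₂ / c := by
      rw [hy0, Real.div_rpow hy.le hcy.le, ← Real.rpow_mul hc.le,
        one_div_mul_cancel hα₂.ne', Real.rpow_one]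
    have hN1 : N (x₀ ^ α₁, y₀ ^ α₂) = 1 := by
      have heq : (x₀ ^ α₁, y₀ ^ α₂) = c⁻¹ • ((x ^ α₁ : ℝ), (y ^ α₂ : ℝ)) := by
        rw [hxp, hyp, Prod.smul_def, smul_eq_mul, smul_eq_mul]
        rw [div_eq_inv_mul, div_eq_inv_mul]
      rw [heq, map_smul_eq_mul, norm_inv, Real.norm_of_nonneg hc.le, ← hcdef,
        inv_mul_cancel₀ hc.ne']
    have h1 : Tendsto (fun t : ℝ =>
        u ⌊(t*c) ^ (1/α₁) * x₀⌋₊ ⌊(t*c) ^ (1/α₂) * y₀⌋₊ / h (t*c)) atTop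
        (𝓝 (lam₀ x₀ y₀)) :=
      (hlim x₀ y₀ hx₀.le hy₀.le hN1).comp (tendsto_id.atTop_mul_const hc)
    have h2 := hRV c hc
    have h3 := h1.mul h2
    refine h3.congr' ?_
    filter_upwards [eventually_gt_atTop 0] with t ht
    have htc : 0 < t * c := mul_pos ht hc
    have e1 : (t*c) ^ (1/α₁) * x₀ = t ^ (1/α₁) * x := by
      rw [Real.mul_rpow ht.le hc.le, hx0]
      field_simp
    have e2 : (t*c) ^ (1/α₂) * y₀ = t ^ (1/α₂) * y := by
      rw [Real.mul_rpow ht.le hc.le, hy0]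
      field_simp
    rw [hf, e1, e2]
    field_simp
    rw [mul_comm (h (t*c)) (h t), mul_div_mul_right _ _ (hpos _ htc).ne']
  · intro hu
    simpa only [hf] using hu
end

section
/- Let K ⊂ (0,∞) be a compact set and let k > 0 with k ≠ 1. Then lim_{t→∞} sup_{x ∈ K} | Γ(t x + k)/(t^k Γ(t x)) − x^k | = 0, where Γ is the Euler Gamma function. -/
open Real Filter Topology

lemma hdiv_aux (c : ℝ) : Tendsto (fun s : ℝ => (s + c) / s) atTop (𝓝 1) := by
  have h : Tendsto (fun s : ℝ => 1 + c / s) atTop (𝓝 (1 + 0)) :=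
    tendsto_const_nhds.add (tendsto_const_nhds.div_atTop tendsto_id)
  rw [add_zero] at h
  refine h.congr' ?_
  filter_upwards [eventually_ne_atTop (0:ℝ)] with s hs
  field_simp

lemma gamma_ratio_base {k : ℝ} (hk : 0 < k) (hk1 : k < 1) :
    Tendsto (fun s : ℝ => Gamma (s + k) / (Gamma s * s ^ k)) atTop (𝓝 1) := by
  have hlow : Tendsto (fun s : ℝ => (s / (s + k)) ^ (1 - k)) atTop (𝓝 1) := by
    have h1 : Tendsto (fun s : ℝ => s / (s + k)) atTop (𝓝 1) := by
      have := (hdiv_aux (-k)).comp (tendsto_atTop_add_const_right atTop k tendsto_id)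
      refine this.congr fun s => ?_
      simp [Function.comp]
    have := h1.rpow_const (p := 1 - k) (Or.inl one_ne_zero)
    simpa using this
  refine tendsto_of_tendsto_of_tendsto_of_le_of_le' hlow tendsto_const_nhds ?_ ?_
  · -- lower bound
    filter_upwards [eventually_gt_atTop (0:ℝ)] with s hs
    have hsk : (0:ℝ) < s + k := by linarith
    have hGs : 0 < Gamma s := Gamma_pos_of_pos hs
    have hGsk : 0 < Gamma (s + k) := Gamma_pos_of_pos hsk
    have key : s * Gamma s ≤ Gamma (s + k) * (s + k) ^ (1 - k) := by
      have h := Real.Gamma_mul_add_mul_le_rpow_Gamma_mul_rpow_Gamma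
        (s := s + k) (t := s + k + 1) (a := k) (b := 1 - k) hsk (by linarith) hk
        (by linarith) (by ring)
      have e1 : k * (s + k) + (1 - k) * (s + k + 1) = s + 1 := by ring
      rw [e1, Gamma_add_one hs.ne', Gamma_add_one hsk.ne'] at h
      calc s * Gamma s ≤ Gamma (s+k) ^ k * ((s+k) * Gamma (s+k)) ^ (1-k) := h
        _ = Gamma (s + k) * (s + k) ^ (1 - k) := by
            rw [mul_rpow hsk.le hGsk.le, ← mul_assoc,
              mul_comm (Gamma (s+k) ^ k), mul_assoc, ← rpow_add hGsk]
            norm_num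
            ring
    -- (s/(s+k))^(1-k) ≤ Γ(s+k)/(Γ(s) s^k)
    rw [div_rpow hs.le hsk.le, div_le_div_iff₀ (by positivity) (by positivity)]
    have e2 : s ^ (1 - k) * s ^ k = s := by
      rw [← rpow_add hs]; norm_num
    calc s ^ (1-k) * (Gamma s * s ^ k) = (s ^ (1-k) * s ^ k) * Gamma s := by ring
      _ = s * Gamma s := by rw [e2]
      _ ≤ Gamma (s+k) * (s+k) ^ (1-k) := key
  · -- upper bound
    filter_upwards [eventually_gt_atTop (0:ℝ)] with s hs
    have hGs : 0 < Gamma s := Gamma_pos_of_pos hs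
    have key : Gamma (s + k) ≤ Gamma s * s ^ k := by
      have h := Real.Gamma_mul_add_mul_le_rpow_Gamma_mul_rpow_Gamma
        (s := s) (t := s + 1) (a := 1 - k) (b := k) hs (by linarith) (by linarith) hk
        (by ring)
      have e1 : (1 - k) * s + k * (s + 1) = s + k := by ring
      rw [e1, Gamma_add_one hs.ne'] at h
      calc Gamma (s + k) ≤ Gamma s ^ (1-k) * (s * Gamma s) ^ k := h
        _ = Gamma s * s ^ k := by
            rw [mul_rpow hs.le hGs.le, ← mul_assoc, mul_comm (Gamma s ^ (1-k)),
              mul_assoc, mul_comm (Gamma s ^ (1-k)), ← rpow_add hGs]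
            norm_num; ring
    rw [div_le_one (by positivity)]
    exact key

lemma gamma_ratio_tendsto (k : ℝ) (hk : 0 < k) :
    Tendsto (fun s : ℝ => Gamma (s + k) / (Gamma s * s ^ k)) atTop (𝓝 1) := by
  obtain ⟨n, hn⟩ := exists_nat_ge k
  induction n generalizing k with
  | zero => exact absurd (hn.trans_lt' hk) (by norm_num)
  | succ n ih =>
    rcases lt_trichotomy k 1 with h1 | h1 | h1
    · exact gamma_ratio_base hk h1
    · subst h1
      refine tendsto_const_nhds.congr' ?_
      filter_upwards [eventually_gt_atTop (0:ℝ)] with s hs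
      have hGs : 0 < Gamma s := Gamma_pos_of_pos hs
      rw [Gamma_add_one hs.ne', rpow_one, mul_comm (Gamma s) s, div_self (by positivity)]
    · have hk' : 0 < k - 1 := by linarith
      have hn' : k - 1 ≤ n := by
        have := hn; push_cast at this ⊢; linarith
      have h := ih (k - 1) hk' hn'
      have h2 := (hdiv_aux (k - 1)).mul h
      rw [mul_one] at h2
      refine h2.congr' ?_
      filter_upwards [eventually_gt_atTop (0:ℝ), eventually_gt_atTop (1 - k)] with s hs hs2
      have hsk : (0:ℝ) < s + (k - 1) := by linarith
      rw [show s + k = (s + (k-1)) + 1 by ring, Gamma_add_one hsk.ne',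
        show k = (k-1) + 1 by ring, rpow_add hs, rpow_one]
      field_simp
      ring

/-- Lemma `gunif`, a uniform Stirling-type estimate: for a
compact set `K ⊂ (0,∞)` and `0 < k ≠ 1`,
`sup_{x ∈ K} |Γ(tx+k)/(t^k Γ(tx)) − x^k| → 0` as `t → ∞`. -/
theorem stmt_15
    (K : Set ℝ) (hK : IsCompact K) (hK_sub : K ⊆ Set.Ioi (0 : ℝ))
    (k : ℝ) (hk : 0 < k) (hk1 : k ≠ 1) :
    TendstoUniformlyOn
      (fun (t : ℝ) (x : ℝ) => Gamma (t * x + k) / (t ^ k * Gamma (t * x)))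
      (fun x : ℝ => x ^ k) atTop K := by
  rcases K.eq_empty_or_nonempty with rfl | hne
  · exact tendstoUniformlyOn_empty
  obtain ⟨a, haK, ha_min⟩ := hK.exists_isLeast hne
  obtain ⟨b, hbK, hb_max⟩ := hK.exists_isGreatest hne
  have ha_min : ∀ x ∈ K, a ≤ x := fun x hx => ha_min hx
  have hb_max : ∀ x ∈ K, x ≤ b := fun x hx => hb_max hx
  have ha : 0 < a := hK_sub haK
  rw [Metric.tendstoUniformlyOn_iff]
  intro ε hε
  set C := b ^ k + 1 with hC
  have hb : 0 < b := lt_of_lt_of_le ha (hb_max a haK)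
  have hCpos : 0 < C := by positivity
  have hg := gamma_ratio_tendsto k hk
  rw [Metric.tendsto_atTop] at hg
  obtain ⟨T, hT⟩ := hg (ε / C) (by positivity)
  filter_upwards [eventually_ge_atTop (max (T / a) 1)] with t ht
  have ht1 : (1:ℝ) ≤ t := le_trans (le_max_right _ _) ht
  have htpos : 0 < t := lt_of_lt_of_le one_pos ht1
  intro x hx
  have hxpos : 0 < x := hK_sub hx
  have htx : T ≤ t * x := by
    have h1 : T / a ≤ t := le_trans (le_max_left _ _) ht
    have h2 : a ≤ x := ha_min x hx
    calc T = (T / a) * a := by field_simp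
      _ ≤ t * x := by
          apply mul_le_mul h1 h2 ha.le htpos.le
  have hgtx := hT (t * x) htx
  have htxpos : 0 < t * x := mul_pos htpos hxpos
  have hGtx : 0 < Gamma (t * x) := Gamma_pos_of_pos htxpos
  have hfe : Gamma (t * x + k) / (t ^ k * Gamma (t * x))
      = x ^ k * (Gamma (t * x + k) / (Gamma (t * x) * (t * x) ^ k)) := by
    rw [mul_rpow htpos.le hxpos.le]
    have hx0 : x ^ k ≠ 0 := by positivity
    have ht0 : t ^ k ≠ 0 := by positivity
    field_simp
  rw [hfe]
  have hxk : x ^ k ≤ b ^ k := rpow_le_rpow hxpos.le (hb_max x hx) hk.le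
  have hxkpos : 0 < x ^ k := by positivity
  rw [Real.dist_eq] at hgtx ⊢
  calc |x ^ k - x ^ k * (Gamma (t*x+k) / (Gamma (t*x) * (t*x) ^ k))|
      = x ^ k * |Gamma (t*x+k) / (Gamma (t*x) * (t*x) ^ k) - 1| := by
        rw [show x ^ k - x ^ k * (Gamma (t*x+k) / (Gamma (t*x) * (t*x) ^ k))
            = x ^ k * (1 - Gamma (t*x+k) / (Gamma (t*x) * (t*x) ^ k)) from by ring,
          abs_mul, abs_of_pos hxkpos, abs_sub_comm]
    _ ≤ b ^ k * |Gamma (t*x+k) / (Gamma (t*x) * (t*x) ^ k) - 1| :=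
        mul_le_mul_of_nonneg_right hxk (abs_nonneg _)
    _ < b ^ k * (ε / C) := by
        apply mul_lt_mul_of_pos_left hgtx (by positivity)
    _ ≤ C * (ε / C) := by
        apply mul_le_mul_of_nonneg_right _ (by positivity)
        rw [hC]; linarith
    _ = ε := by field_simp
end

section
/- Fix λ > 0, μ > 0, c₁, c₂ ∈ (0,1) with c₁ ≠ c₂, set a = c₂/c₁, and define q : Z_+² → R_+ by q(i,j) = (Γ(i+λ+1)/(Γ(λ+1)Γ(i+1))) · (Γ(j+μ)/(Γ(μ)Γ(j+1))) · (1/c₁) ∫₁^∞ s^{-(2+1/c₁+λ)} (1−s^{-1})^i (1−s^{-a})^j s^{-aμ} ds. Then for all x, y > 0, lim_{n→∞} q(⌊n^{c₁} x⌋, ⌊n^{c₂} y⌋) / n^{-(1+c₁+c₂)} = (x^λ y^{μ-1}/(c₁ Γ(λ+1) Γ(μ))) ∫₀^∞ z^{-(2+1/c₁+λ+aμ)} e^{-(x/z + y/z^a)} dz. -/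
/-!
Euler's limit formula gives `Γ(k + d + 1) / Γ(k + 1) ~ k ^ d`, so with `i ~ n ^ c₁ x` and
`j ~ n ^ c₂ y` the two Gamma ratios contribute `x ^ λ` and `y ^ (μ - 1)`. In the integral put
`s = n ^ c₁ z`: since `(n ^ c₁) ^ a = n ^ c₂`, the integrand becomes
`z ^ (-p) (1 - 1 / (n ^ c₁ z)) ^ i (1 - 1 / (n ^ c₂ z ^ a)) ^ j`, `p = 2 + 1/c₁ + λ + aμ`,
which tends to `z ^ (-p) exp (-(x / z + y / z ^ a))` and, by `1 - u ≤ exp (-u)`, is dominated by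
`z ^ (-p) exp (-x / (2 z))`, integrable on `(0, ∞)` because `p > 1`. The powers of `n` cancel
exactly against `n ^ (1 + c₁ + c₂)`.
-/

open Real Filter Topology MeasureTheory Set

lemma prod_range_add_eq_Gamma_div {s : ℝ} (hs : 0 < s) (n : ℕ) :
    ∏ j ∈ Finset.range n, (s + j) = Gamma (s + n) / Gamma s := by
  induction n with
  | zero => simp [(Gamma_pos_of_pos hs).ne']
  | succ n ih =>
    rw [Finset.prod_range_succ, ih, Nat.cast_succ, ← add_assoc,
      Gamma_add_one (by positivity : s + n ≠ 0)]
    ring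

lemma tendsto_Gamma_nat_add_div {d : ℝ} (hd : -1 < d) :
    Tendsto (fun n : ℕ => Gamma (n + d + 1) / (Gamma (n + 1) * (n : ℝ) ^ d))
      atTop (𝓝 1) := by
  have hs : 0 < d + 1 := by linarith
  have hΓs := (Gamma_pos_of_pos hs).ne'
  have hseq : Tendsto (fun n : ℕ => Gamma (d + 1) / GammaSeq (d + 1) n) atTop (𝓝 1) := by
    have := (tendsto_const_nhds (x := Gamma (d + 1))).div (GammaSeq_tendsto_Gamma (d + 1)) hΓs
    rwa [div_self hΓs] at this
  have hprod := hseq.mul (tendsto_natCast_div_add_atTop (d + 1))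
  rw [one_mul] at hprod
  refine hprod.congr' ?_
  filter_upwards [eventually_gt_atTop 0] with n hn
  have hn' : (0 : ℝ) < n := by exact_mod_cast hn
  have hnd : (0 : ℝ) < n + d + 1 := by linarith
  rw [GammaSeq, prod_range_add_eq_Gamma_div hs, ← Gamma_nat_eq_factorial,
    show d + 1 + ((n + 1 : ℕ) : ℝ) = (n + d + 1) + 1 by push_cast; ring,
    Gamma_add_one hnd.ne', rpow_add hn', rpow_one]
  have := (Gamma_pos_of_pos hnd).ne'
  have := (Gamma_pos_of_pos (by positivity : (0 : ℝ) < n + 1)).ne'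
  field_simp
  ring

section Limits

variable {α : Type*} {l : Filter α} {u : α → ℝ} {k : α → ℕ}

lemma tendsto_natFloor_mul_div (hu : Tendsto u l atTop) {w : ℝ} (hw : 0 ≤ w) :
    Tendsto (fun n => (⌊u n * w⌋₊ : ℝ) / u n) l (𝓝 w) := by
  simpa only [Function.comp_def, mul_comm w] using (tendsto_nat_floor_mul_div_atTop hw).comp hu

lemma tendsto_natCast_atTop_of_tendsto_div (hu : Tendsto u l atTop) {w : ℝ} (hw : 0 < w)
    (hk : Tendsto (fun n => (k n : ℝ) / u n) l (𝓝 w)) : Tendsto k l atTop := by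
  rw [← tendsto_natCast_atTop_iff (R := ℝ)]
  refine (hk.pos_mul_atTop hw hu).congr' ?_
  filter_upwards [hu.eventually_gt_atTop 0] with n hn
  exact div_mul_cancel₀ _ hn.ne'

lemma tendsto_one_add_div_pow_of_tendsto_div (t : ℝ) (hu : Tendsto u l atTop) {r : ℝ}
    (hk : Tendsto (fun n => (k n : ℝ) / u n) l (𝓝 r)) :
    Tendsto (fun n => (1 + t / u n) ^ k n) l (𝓝 (exp (r * t))) := by
  have hlog : Tendsto (fun n => u n * log (1 + t / u n)) l (𝓝 t) :=
    (tendsto_mul_log_one_add_div_atTop t).comp hu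
  refine ((continuous_exp.tendsto _).comp (hk.mul hlog)).congr' ?_
  have hsmall : ∀ᶠ n in l, -1 < t / u n :=
    (tendsto_const_nhds.div_atTop hu).eventually (eventually_gt_nhds (by norm_num))
  filter_upwards [hu.eventually_gt_atTop 0, hsmall] with n hn hn'
  rw [Function.comp_apply, ← mul_assoc, div_mul_cancel₀ _ hn.ne', exp_nat_mul,
    exp_log (by linarith)]

lemma tendsto_Gamma_add_div_of_tendsto_div {d w : ℝ} (hd : -1 < d) (hw : 0 < w)
    (hu : Tendsto u l atTop) (hk : Tendsto (fun n => (k n : ℝ) / u n) l (𝓝 w)) :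
    Tendsto (fun n => Gamma (k n + d + 1) / (Gamma (k n + 1) * u n ^ d)) l (𝓝 (w ^ d)) := by
  have hkt := tendsto_natCast_atTop_of_tendsto_div hu hw hk
  have hprod :=
    ((tendsto_Gamma_nat_add_div hd).comp hkt).mul (hk.rpow_const (p := d) (Or.inl hw.ne'))
  rw [one_mul] at hprod
  refine hprod.congr' ?_
  filter_upwards [hu.eventually_gt_atTop 0, hkt.eventually_gt_atTop 0] with n hn hkn
  have hkn' : (0 : ℝ) < k n := by exact_mod_cast hkn
  have := (Gamma_pos_of_pos (by positivity : (0 : ℝ) < k n + 1)).ne'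
  rw [Function.comp_apply, div_rpow hkn'.le hn.le]
  field_simp [(rpow_pos_of_pos hkn' d).ne', (rpow_pos_of_pos hn d).ne']

end Limits

lemma integrableOn_rpow_neg_mul_exp_neg_div {p A : ℝ} (hp : 1 < p) (hA : 0 < A) :
    IntegrableOn (fun z : ℝ => z ^ (-p) * exp (-(A / z))) (Ioi 0) := by
  have h := integrableOn_rpow_mul_exp_neg_mul_rpow (s := p - 2) (p := 1) (by linarith) one_pos hA
  rw [← integrableOn_Ioi_comp_rpow_iff' _ (p := -1) (by norm_num)] at h
  refine h.congr_fun (fun z hz => ?_) measurableSet_Ioi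
  have hz : 0 < z := hz
  dsimp only
  rw [smul_eq_mul, rpow_one, ← rpow_mul hz.le, ← mul_assoc, ← rpow_add hz, rpow_neg_one,
    neg_mul, ← div_eq_mul_inv]
  ring_nf

lemma rpow_sub_one_mul_integral_Ioi_one {t : ℝ} (ht : 0 < t) (p : ℝ) (g : ℝ → ℝ) :
    t ^ (p - 1) * ∫ s in Ioi 1, s ^ (-p) * g s = ∫ z in Ioi t⁻¹, z ^ (-p) * g (t * z) := by
  calc t ^ (p - 1) * ∫ s in Ioi 1, s ^ (-p) * g s
      = t ^ p * (t⁻¹ * ∫ s in Ioi (t * t⁻¹), s ^ (-p) * g s) := by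
        rw [mul_inv_cancel₀ ht.ne', rpow_sub_one ht.ne']; ring
    _ = t ^ p * ∫ z in Ioi t⁻¹, (t * z) ^ (-p) * g (t * z) := by
        rw [integral_comp_mul_left_Ioi (fun s => s ^ (-p) * g s) _ ht, smul_eq_mul]
    _ = ∫ z in Ioi t⁻¹, z ^ (-p) * g (t * z) := by
        rw [← integral_const_mul]
        refine setIntegral_congr_fun measurableSet_Ioi fun z hz => ?_
        have hz0 : 0 < z := (inv_pos.2 ht).trans hz
        rw [mul_rpow ht.le hz0.le, rpow_neg ht.le, ← mul_assoc, ← mul_assoc,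
          mul_inv_cancel₀ (rpow_pos_of_pos ht p).ne', one_mul]

lemma abs_one_sub_inv_pow_mul_one_sub_rpow_neg_pow_le {s a : ℝ} (hs : 1 < s) (ha : 0 < a)
    (i j : ℕ) : |(1 - s⁻¹) ^ i * (1 - s ^ (-a)) ^ j| ≤ exp (-(i / s)) := by
  have hinv : s⁻¹ < 1 := inv_lt_one_of_one_lt₀ hs
  have hrpow₀ : 0 < s ^ (-a) := rpow_pos_of_pos (by linarith) _
  have hrpow₁ : s ^ (-a) < 1 := rpow_lt_one_of_one_lt_of_neg hs (by linarith)
  rw [abs_of_nonneg (by positivity)]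
  calc (1 - s⁻¹) ^ i * (1 - s ^ (-a)) ^ j ≤ exp (-s⁻¹) ^ i * 1 := by
        gcongr
        · exact one_sub_le_exp_neg _
        · exact pow_le_one₀ (by linarith) (by linarith)
    _ = exp (-(i / s)) := by rw [mul_one, ← exp_nat_mul]; ring_nf

theorem tendsto_rpow_sub_one_mul_integral_Ioi_one {p a x y : ℝ} (hp : 1 < p) (ha : 0 < a)
    (hx : 0 < x) {t : ℕ → ℝ} {i j : ℕ → ℕ} (ht : Tendsto t atTop atTop)
    (hi : Tendsto (fun n => (i n : ℝ) / t n) atTop (𝓝 x))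
    (hj : Tendsto (fun n => (j n : ℝ) / t n ^ a) atTop (𝓝 y)) :
    Tendsto (fun n => t n ^ (p - 1) *
        ∫ s in Ioi 1, s ^ (-p) * ((1 - s⁻¹) ^ i n * (1 - s ^ (-a)) ^ j n))
      atTop (𝓝 (∫ z in Ioi 0, z ^ (-p) * exp (-(x / z + y / z ^ a)))) := by
  set g : ℕ → ℝ → ℝ := fun n s => (1 - s⁻¹) ^ i n * (1 - s ^ (-a)) ^ j n
  -- the substituted domain `Ioi (t n)⁻¹` depends on `n`: extend by zero to `Ioi 0`
  set F : ℕ → ℝ → ℝ := fun n =>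
    (Ioi (t n)⁻¹).indicator fun z => z ^ (-p) * g n (t n * z)
  have hF : ∀ᶠ n in atTop,
      ∫ z in Ioi 0, F n z = t n ^ (p - 1) * ∫ s in Ioi 1, s ^ (-p) * g n s := by
    filter_upwards [ht.eventually_gt_atTop 0] with n hn
    rw [rpow_sub_one_mul_integral_Ioi_one hn, setIntegral_indicator measurableSet_Ioi,
      Ioi_inter_Ioi, max_eq_right (inv_pos.2 hn).le]
  refine (tendsto_integral_filter_of_dominated_convergence
    (fun z => z ^ (-p) * exp (-((x / 2) / z))) ?_ ?_ ?_ ?_).congr' hF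
  · exact Eventually.of_forall fun n =>
      ((by fun_prop : Measurable _).indicator measurableSet_Ioi).aestronglyMeasurable
  · have hix := hi.eventually (eventually_gt_nhds (half_lt_self hx))
    filter_upwards [ht.eventually_gt_atTop 0, hix] with n hn hin
    refine (ae_restrict_iff' measurableSet_Ioi).2 (Eventually.of_forall fun z (hz : 0 < z) => ?_)
    by_cases hmem : z ∈ Ioi (t n)⁻¹
    · have htz : 1 < t n * z := by simpa [inv_lt_iff_one_lt_mul₀' hn] using hmem
      rw [show F n z = _ from indicator_of_mem hmem _, norm_mul,
        norm_of_nonneg (rpow_pos_of_pos hz _).le]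
      gcongr
      refine (abs_one_sub_inv_pow_mul_one_sub_rpow_neg_pow_le htz ha _ _).trans ?_
      rw [← div_div]
      exact exp_le_exp.2 (neg_le_neg (div_le_div_of_nonneg_right hin.le hz.le))
    · rw [show F n z = 0 from indicator_of_notMem hmem _, norm_zero]
      positivity
  · exact integrableOn_rpow_neg_mul_exp_neg_div hp (half_pos hx)
  · refine (ae_restrict_iff' measurableSet_Ioi).2 (Eventually.of_forall fun z (hz : 0 < z) => ?_)
    have hta : Tendsto (fun n => t n ^ a) atTop atTop := (tendsto_rpow_atTop ha).comp ht
    have hlim := ((tendsto_one_add_div_pow_of_tendsto_div (-z⁻¹) ht hi).mul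
      (tendsto_one_add_div_pow_of_tendsto_div (-(z ^ a)⁻¹) hta hj)).const_mul (z ^ (-p))
    rw [← exp_add, show x * -z⁻¹ + y * -(z ^ a)⁻¹ = -(x / z + y / z ^ a) by ring] at hlim
    refine hlim.congr' ?_
    filter_upwards [ht.eventually_gt_atTop z⁻¹] with n hn
    have hn0 : 0 < t n := (inv_pos.2 hz).trans hn
    rw [show F n z = _ from indicator_of_mem (inv_lt_of_inv_lt₀ hz hn) _]
    simp only [g, rpow_neg (mul_nonneg hn0.le hz.le), mul_rpow hn0.le hz.le]
    field_simp
    ring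

lemma setIntegral_Ioi_one_rpow_neg_mul_mul_rpow_neg (b c : ℝ) (f g : ℝ → ℝ) :
    ∫ s in Ioi 1, s ^ (-b) * f s * g s * s ^ (-c) =
      ∫ s in Ioi 1, s ^ (-(b + c)) * (f s * g s) := by
  refine setIntegral_congr_fun measurableSet_Ioi fun s (hs : 1 < s) => ?_
  rw [neg_add, rpow_add (by linarith)]
  ring

lemma Gamma_ratio_mul_integral_div_rpow_eq {lam mu c₁ c₂ a n : ℝ} (hc₁ : 0 < c₁)
    (ha : a = c₂ / c₁) (hn : 0 < n) (i j : ℕ) :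
    Gamma (i + lam + 1) / (Gamma (lam + 1) * Gamma (i + 1)) *
        (Gamma (j + mu) / (Gamma mu * Gamma (j + 1))) * (1 / c₁) *
        (∫ s in Ioi 1, s ^ (-(2 + 1 / c₁ + lam)) * (1 - s⁻¹) ^ i * (1 - s ^ (-a)) ^ j *
          s ^ (-(a * mu))) / n ^ (-(1 + c₁ + c₂)) =
      (c₁ * Gamma (lam + 1) * Gamma mu)⁻¹ *
        (Gamma (i + lam + 1) / (Gamma (i + 1) * (n ^ c₁) ^ lam) *
          (Gamma (j + (mu - 1) + 1) / (Gamma (j + 1) * ((n ^ c₁) ^ a) ^ (mu - 1))) *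
          ((n ^ c₁) ^ (2 + 1 / c₁ + lam + a * mu - 1) *
            ∫ s in Ioi 1, s ^ (-(2 + 1 / c₁ + lam + a * mu)) *
              ((1 - s⁻¹) ^ i * (1 - s ^ (-a)) ^ j))) := by
  have hscale : (n ^ c₁) ^ (2 + 1 / c₁ + lam + a * mu - 1) =
      n ^ (1 + c₁ + c₂) * ((n ^ c₁) ^ lam * ((n ^ c₁) ^ a) ^ (mu - 1)) := by
    simp only [← rpow_mul hn.le, ← rpow_add hn]
    congr 1
    rw [ha]
    field_simp
    ring
  rw [setIntegral_Ioi_one_rpow_neg_mul_mul_rpow_neg, hscale, rpow_neg hn.le,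
    show (j : ℝ) + (mu - 1) + 1 = j + mu by ring]
  field_simp

theorem stmt_16_general
    (lam mu c₁ c₂ : ℝ) (hlam : 0 < lam) (hmu : 0 < mu)
    (hc₁ : c₁ ∈ Set.Ioo (0 : ℝ) 1) (hc₂ : c₂ ∈ Set.Ioo (0 : ℝ) 1)
    (a : ℝ) (ha : a = c₂ / c₁)
    (q : ℕ → ℕ → ℝ)
    (hq : ∀ i j : ℕ, q i j =
      (Gamma ((i : ℝ) + lam + 1) / (Gamma (lam + 1) * Gamma ((i : ℝ) + 1))) *
        (Gamma ((j : ℝ) + mu) / (Gamma mu * Gamma ((j : ℝ) + 1))) *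
        (1 / c₁) *
        ∫ s in Set.Ioi (1 : ℝ),
          s ^ (-(2 + 1 / c₁ + lam)) * (1 - s⁻¹) ^ i * (1 - s ^ (-a)) ^ j *
            s ^ (-(a * mu))) :
    ∀ x y : ℝ, 0 < x → 0 < y →
      Tendsto
        (fun n : ℕ => q ⌊(n : ℝ) ^ c₁ * x⌋₊ ⌊(n : ℝ) ^ c₂ * y⌋₊ /
          (n : ℝ) ^ (-(1 + c₁ + c₂)))
        atTop
        (𝓝 (x ^ lam * y ^ (mu - 1) / (c₁ * Gamma (lam + 1) * Gamma mu) *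
            ∫ z in Set.Ioi (0 : ℝ),
              z ^ (-(2 + 1 / c₁ + lam + a * mu)) *
                exp (-(x / z + y / z ^ a)))) := by
  intro x y hx hy
  obtain ⟨hc₁, -⟩ := hc₁
  obtain ⟨hc₂, -⟩ := hc₂
  have ha₀ : 0 < a := ha ▸ div_pos hc₂ hc₁
  set t : ℕ → ℝ := fun n => (n : ℝ) ^ c₁
  have ht : Tendsto t atTop atTop := (tendsto_rpow_atTop hc₁).comp tendsto_natCast_atTop_atTop
  have hta : Tendsto (fun n => t n ^ a) atTop atTop := (tendsto_rpow_atTop ha₀).comp ht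
  have htc₂ : ∀ n : ℕ, t n ^ a = (n : ℝ) ^ c₂ := fun n => by
    rw [← rpow_mul n.cast_nonneg, ha, mul_div_cancel₀ _ hc₁.ne']
  have hi := tendsto_natFloor_mul_div ht hx.le
  have hj := tendsto_natFloor_mul_div hta hy.le
  simp only [← htc₂]
  have hp : 1 < 2 + 1 / c₁ + lam + a * mu := by
    have : 0 < 1 / c₁ := by positivity
    nlinarith
  have hlim := (((tendsto_Gamma_add_div_of_tendsto_div (d := lam) (by linarith) hx ht hi).mul
    (tendsto_Gamma_add_div_of_tendsto_div (d := mu - 1) (by linarith) hy hta hj)).mul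
    (tendsto_rpow_sub_one_mul_integral_Ioi_one hp ha₀ hx ht hi hj)).const_mul
      (c₁ * Gamma (lam + 1) * Gamma mu)⁻¹
  rw [← mul_assoc, ← div_eq_inv_mul] at hlim
  refine hlim.congr' ?_
  filter_upwards [eventually_gt_atTop 0] with n hn
  rw [hq]
  exact (Gamma_ratio_mul_integral_div_rpow_eq hc₁ ha (Nat.cast_pos.2 hn) _ _).symm

/-- regular variation of the integral-form pmf `q(i,j)` of
`(T_{λ+1}(Z⁻¹), T̃_μ(Z^{-a}))` in the non-standard case `c₁ ≠ c₂` of the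
preferential attachment model. -/
theorem stmt_16
    (lam mu c₁ c₂ : ℝ) (hlam : 0 < lam) (hmu : 0 < mu)
    (hc₁ : c₁ ∈ Set.Ioo (0 : ℝ) 1) (hc₂ : c₂ ∈ Set.Ioo (0 : ℝ) 1)
    (hc : c₁ ≠ c₂) (a : ℝ) (ha : a = c₂ / c₁)
    (q : ℕ → ℕ → ℝ)
    (hq : ∀ i j : ℕ, q i j =
      (Gamma ((i : ℝ) + lam + 1) / (Gamma (lam + 1) * Gamma ((i : ℝ) + 1))) *
        (Gamma ((j : ℝ) + mu) / (Gamma mu * Gamma ((j : ℝ) + 1))) *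
        (1 / c₁) *
        ∫ s in Set.Ioi (1 : ℝ),
          s ^ (-(2 + 1 / c₁ + lam)) * (1 - s⁻¹) ^ i * (1 - s ^ (-a)) ^ j *
            s ^ (-(a * mu))) :
    ∀ x y : ℝ, 0 < x → 0 < y →
      Tendsto
        (fun n : ℕ => q ⌊(n : ℝ) ^ c₁ * x⌋₊ ⌊(n : ℝ) ^ c₂ * y⌋₊ /
          (n : ℝ) ^ (-(1 + c₁ + c₂)))
        atTop
        (𝓝 (x ^ lam * y ^ (mu - 1) / (c₁ * Gamma (lam + 1) * Gamma mu) *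
            ∫ z in Set.Ioi (0 : ℝ),
              z ^ (-(2 + 1 / c₁ + lam + a * mu)) *
                exp (-(x / z + y / z ^ a)))) :=
  stmt_16_general lam mu c₁ c₂ hlam hmu hc₁ hc₂ a ha q hq
end

section
/- Let f : R_+² → R_+ be a probability density function, let α₁, α₂ > 0, h(t) = (t · t^{1/α₁} · t^{1/α₂})^{-1}, and let E₀ = {(x,y) ∈ R_+² : ‖(x^{α₁}, y^{α₂})‖ = 1} for a fixed norm ‖·‖ on R². Suppose λ₀ is positive and bounded on E₀, f is regularly varying with power-law scaling (f(t^{1/α₁}x, t^{1/α₂}y)/h(t) → λ₀(x/‖w‖^{1/α₁}, y/‖w‖^{1/α₂})‖w‖^{-(1+1/α₁+1/α₂)} for all x,y>0, where w=(x^{α₁},y^{α₂})), and the convergence is uniform on E₀: lim_{t→∞} sup_{(x,y)∈E₀} |f(t^{1/α₁}x, t^{1/α₂}y)/h(t) − λ₀(x,y)| = 0. Then the associated probability measure is regularly varying: for a random vector (X,Y) with density f and every Borel set A ⊆ R_+² \ {0} bounded away from the origin with ∫_A λ(x,y)dxdy < ∞, one has t·P[(X/t^{1/α₁}, Y/t^{1/α₂})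 ∈ A] → ∫_A λ(x,y) dx dy as t → ∞, where λ(x,y) = λ₀(x/‖w‖^{1/α₁}, y/‖w‖^{1/α₂})‖w‖^{-(1+1/α₁+1/α₂)}. -/
/-!
Write `R(v) = ‖(v₁^{α₁}, v₂^{α₂})‖`, `κ = 1 + 1/α₁ + 1/α₂` and
`F_t(v) = f(t^{1/α₁} v₁, t^{1/α₂} v₂) / h(t)`. The power-law scaling gives the exact identity
`F_t(v) = F_{t R(v)}(v₁ / R(v)^{1/α₁}, v₂ / R(v)^{1/α₂}) · R(v)^{-κ}`, whose inner point lies on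
`E₀`. On a set `A` bounded away from the origin `R ≥ r₀ > 0`, so uniform convergence on `E₀`
yields `|F_t - λ| ≤ δ R^{-κ}` on `A` for all large `t`. The weight `R^{-κ}` is integrable on
`A` by the layer-cake formula, because `{R ≤ X}` lies in a box of area `≲ X^{1/α₁ + 1/α₂}` and
`1/α₁ + 1/α₂ < κ`; hence `∫_A F_t → ∫_A λ`. A diagonal linear change of variables identifies
`∫_A F_t` with `t ℙ[(X/t^{1/α₁}, Y/t^{1/α₂}) ∈ A]`.
-/

open Real Filter Topology MeasureTheory ProbabilityTheory Set
open scoped ENNReal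

theorem Seminorm.continuous_of_finiteDimensional {E : Type*} [NormedAddCommGroup E]
    [NormedSpace ℝ E] [FiniteDimensional ℝ E] (N : Seminorm ℝ E) : Continuous N :=
  continuousOn_univ.mp (N.convexOn.continuousOn isOpen_univ)

theorem Seminorm.exists_pos_mul_norm_le {E : Type*} [NormedAddCommGroup E] [NormedSpace ℝ E]
    [FiniteDimensional ℝ E] (N : Seminorm ℝ E) (hN : ∀ v, N v = 0 → v = 0) :
    ∃ c > 0, ∀ w, c * ‖w‖ ≤ N w := by
  obtain ⟨c, hc, hcN⟩ := (isCompact_sphere (0 : E) 1).exists_forall_le'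
    N.continuous_of_finiteDimensional.continuousOn (a := 0) fun w hw =>
      (apply_nonneg N w).lt_of_ne' fun h => by simp [hN w h] at hw
  refine ⟨c, hc, fun w => ?_⟩
  rcases eq_or_ne w 0 with rfl | hw
  · simp
  have hw' : 0 < ‖w‖ := norm_pos_iff.mpr hw
  have hunit := hcN (‖w‖⁻¹ • w) (by simp [norm_smul, hw'.ne'])
  rw [map_smul_eq_mul, norm_inv, norm_norm] at hunit
  calc c * ‖w‖ ≤ ‖w‖⁻¹ * N w * ‖w‖ := by gcongr
    _ = N w := by field_simp

theorem map_volume_prod_mul_left {a b : ℝ} (ha : a ≠ 0) (hb : b ≠ 0) :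
    Measure.map (fun v : ℝ × ℝ => (a * v.1, b * v.2)) volume
      = ENNReal.ofReal |(a * b)⁻¹| • (volume : Measure (ℝ × ℝ)) := by
  rw [show (fun v : ℝ × ℝ => (a * v.1, b * v.2)) = Prod.map (a * ·) (b * ·) from rfl,
    Measure.volume_eq_prod, ← Measure.map_prod_map _ _ (measurable_const_mul a)
      (measurable_const_mul b), Real.map_volume_mul_left ha, Real.map_volume_mul_left hb,
    Measure.prod_smul_left, Measure.prod_smul_right, smul_smul, ← ENNReal.ofReal_mul
      (abs_nonneg _), ← abs_mul, mul_inv]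

theorem setLIntegral_eq_mul_setLIntegral_comp_mul_left {a b : ℝ} (ha : a ≠ 0) (hb : b ≠ 0)
    {g : ℝ × ℝ → ℝ≥0∞} (hg : Measurable g) {s : Set (ℝ × ℝ)} (hs : MeasurableSet s) :
    ∫⁻ v in s, g v = ENNReal.ofReal |a * b| *
      ∫⁻ v in (fun v : ℝ × ℝ => (a * v.1, b * v.2)) ⁻¹' s, g (a * v.1, b * v.2) := by
  have h := setLIntegral_map (μ := volume) hs hg
    ((measurable_fst.const_mul a).prodMk (measurable_snd.const_mul b))
  rw [map_volume_prod_mul_left ha hb, Measure.restrict_smul, lintegral_smul_measure,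
    smul_eq_mul] at h
  rw [← h, ← mul_assoc, ← ENNReal.ofReal_mul (abs_nonneg _), ← abs_mul,
    mul_inv_cancel₀ (mul_ne_zero ha hb), abs_one, ENNReal.ofReal_one, one_mul]

theorem integrableOn_of_measure_inter_lt_le_rpow {α : Type*} [MeasurableSpace α]
    {μ : Measure α} {s : Set α} (hs : MeasurableSet s) {g : α → ℝ} (hg : Measurable g)
    (hg_nonneg : ∀ x ∈ s, 0 ≤ g x) {M K q : ℝ} (hgM : ∀ x ∈ s, g x ≤ M) (hq : q < 1)
    (hdist : ∀ t > 0, μ (s ∩ {x | t < g x}) ≤ ENNReal.ofReal (K * t ^ (-q))) :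
    IntegrableOn g s μ := by
  refine ⟨hg.aestronglyMeasurable, ?_⟩
  rw [hasFiniteIntegral_iff_ofReal (ae_restrict_of_forall_mem hs hg_nonneg),
    lintegral_eq_lintegral_meas_lt _ (ae_restrict_of_forall_mem hs hg_nonneg)
      hg.aemeasurable]
  have hbound : ∀ t ∈ Ioi (0 : ℝ), μ.restrict s {x | t < g x}
      ≤ (Ioo 0 M).indicator (fun t => ENNReal.ofReal (K * t ^ (-q))) t := by
    intro t ht
    rw [Measure.restrict_apply (measurableSet_lt measurable_const hg), inter_comm]
    by_cases htM : t < M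
    · rw [indicator_of_mem (show t ∈ Ioo 0 M from ⟨ht, htM⟩)]
      exact hdist t ht
    · have hempty : s ∩ {x | t < g x} = ∅ :=
        eq_empty_of_forall_notMem fun x hx => htM (hx.2.trans_le (hgM x hx.1))
      simp [hempty]
  have hint : IntegrableOn (fun t : ℝ => K * t ^ (-q)) (Ioo 0 M) :=
    (((intervalIntegral.integrableOn_Ioo_rpow_iff (lt_max_of_lt_right one_pos)).mpr
      (by linarith)).mono_set (Ioo_subset_Ioo_right (le_max_left M 1))).const_mul K
  calc ∫⁻ t in Ioi 0, μ.restrict s {x | t < g x}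
      ≤ ∫⁻ t in Ioi 0, (Ioo 0 M).indicator (fun t => ENNReal.ofReal (K * t ^ (-q))) t :=
        setLIntegral_mono' measurableSet_Ioi hbound
    _ = ∫⁻ t in Ioo 0 M, ENNReal.ofReal (K * t ^ (-q)) := by
        rw [lintegral_indicator measurableSet_Ioo, Measure.restrict_restrict measurableSet_Ioo,
          inter_eq_left.mpr Ioo_subset_Ioi_self]
    _ < ⊤ := hint.lintegral_lt_top

theorem tendsto_setIntegral_of_forall_abs_sub_le {ι α : Type*} [MeasurableSpace α]
    {l : Filter ι} {μ : Measure α} {s : Set α} (hs : MeasurableSet s) {F : ι → α → ℝ}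
    {g ρ : α → ℝ} (hF : ∀ i, AEStronglyMeasurable (F i) (μ.restrict s))
    (hg : IntegrableOn g s μ) (hρ : IntegrableOn ρ s μ)
    (hclose : ∀ δ > 0, ∀ᶠ i in l, ∀ x ∈ s, |F i x - g x| ≤ δ * ρ x) :
    Tendsto (fun i => ∫ x in s, F i x ∂μ) l (𝓝 (∫ x in s, g x ∂μ)) := by
  rw [Metric.tendsto_nhds]
  intro ε hε
  set C := |∫ x in s, ρ x ∂μ|
  have hδ : 0 < ε / (C + 1) := by positivity
  filter_upwards [hclose _ hδ] with i hi
  have hnorm : ∀ᵐ x ∂μ.restrict s, ‖F i x - g x‖ ≤ ε / (C + 1) * ρ x :=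
    ae_restrict_of_forall_mem hs hi
  have hFi : IntegrableOn (F i) s μ := by
    simpa [IntegrableOn] using
      (Integrable.mono' (hρ.const_mul _) ((hF i).sub hg.1) hnorm).add hg
  rw [dist_eq_norm, ← integral_sub hFi hg]
  calc ‖∫ x in s, (F i x - g x) ∂μ‖ ≤ ∫ x in s, ε / (C + 1) * ρ x ∂μ :=
        norm_integral_le_of_norm_le (hρ.const_mul _) hnorm
    _ = ε / (C + 1) * ∫ x in s, ρ x ∂μ := integral_const_mul _ _
    _ ≤ ε / (C + 1) * C := mul_le_mul_of_nonneg_left (le_abs_self _) hδ.le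
    _ < ε := by
        rw [div_mul_eq_mul_div, div_lt_iff₀ (by positivity)]
        nlinarith [abs_nonneg (∫ x in s, ρ x ∂μ)]

noncomputable def rescaledDensity (f : ℝ × ℝ → ℝ) (α₁ α₂ t : ℝ) (v : ℝ × ℝ) : ℝ :=
  f (t ^ (1 / α₁) * v.1, t ^ (1 / α₂) * v.2) / (t * t ^ (1 / α₁) * t ^ (1 / α₂))⁻¹

theorem rescaledDensity_eq_mul_rpow_mul (f : ℝ × ℝ → ℝ) (α₁ α₂ : ℝ) {t s : ℝ}
    (ht : 0 < t) (hs : 0 < s) (v : ℝ × ℝ) :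
    rescaledDensity f α₁ α₂ t v = rescaledDensity f α₁ α₂ (t * s)
      (v.1 / s ^ (1 / α₁), v.2 / s ^ (1 / α₂)) * s ^ (-(1 + 1 / α₁ + 1 / α₂)) := by
  simp only [rescaledDensity, div_inv_eq_mul, mul_rpow ht.le hs.le,
    rpow_neg hs.le, rpow_add hs, rpow_one]
  field_simp

theorem measurable_rescaledDensity {f : ℝ × ℝ → ℝ} (hf : Measurable f) (α₁ α₂ t : ℝ) :
    Measurable (rescaledDensity f α₁ α₂ t) :=
  (hf.comp ((measurable_fst.const_mul _).prodMk (measurable_snd.const_mul _))).div_const _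

theorem mul_measure_preimage_eq_setIntegral_rescaledDensity {Ω : Type*} [MeasurableSpace Ω]
    {μ : Measure Ω} {V : Ω → ℝ × ℝ} {f : ℝ × ℝ → ℝ} (hf_meas : Measurable f)
    (hf_nonneg : ∀ v, 0 ≤ f v)
    (hdens : ∀ A : Set (ℝ × ℝ), MeasurableSet A → μ (V ⁻¹' A) = ∫⁻ v in A, ENNReal.ofReal (f v))
    (α₁ α₂ : ℝ) {A : Set (ℝ × ℝ)} (hA : MeasurableSet A) {t : ℝ} (ht : 0 < t) :
    t * (μ {ω | ((V ω).1 / t ^ (1 / α₁), (V ω).2 / t ^ (1 / α₂)) ∈ A}).toReal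
      = ∫ v in A, rescaledDensity f α₁ α₂ t v := by
  set a := t ^ (1 / α₁)
  set b := t ^ (1 / α₂)
  have ha : 0 < a := rpow_pos_of_pos ht _
  have hb : 0 < b := rpow_pos_of_pos ht _
  have hB : MeasurableSet ((fun v : ℝ × ℝ => (v.1 / a, v.2 / b)) ⁻¹' A) :=
    hA.preimage ((measurable_fst.div_const _).prodMk (measurable_snd.div_const _))
  have hpre : (fun v : ℝ × ℝ => (a * v.1, b * v.2)) ⁻¹'
      ((fun v : ℝ × ℝ => (v.1 / a, v.2 / b)) ⁻¹' A) = A := by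
    ext v
    simp [mul_div_cancel_left₀ _ ha.ne', mul_div_cancel_left₀ _ hb.ne']
  rw [show {ω | ((V ω).1 / a, (V ω).2 / b) ∈ A}
      = V ⁻¹' ((fun v : ℝ × ℝ => (v.1 / a, v.2 / b)) ⁻¹' A) from rfl, hdens _ hB,
    setLIntegral_eq_mul_setLIntegral_comp_mul_left ha.ne' hb.ne' hf_meas.ennreal_ofReal hB,
    hpre, ENNReal.toReal_mul, ENNReal.toReal_ofReal (abs_nonneg _),
    ← integral_eq_lintegral_of_nonneg_ae (Eventually.of_forall fun _ => hf_nonneg _)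
      (hf_meas.comp ((measurable_fst.const_mul a).prodMk
        (measurable_snd.const_mul b))).aestronglyMeasurable]
  simp only [rescaledDensity, div_inv_eq_mul, integral_mul_const, abs_of_pos (mul_pos ha hb)]
  ring

section Anisotropic

variable (N : Seminorm ℝ (ℝ × ℝ)) (α₁ α₂ : ℝ)

noncomputable def anisoRadius (v : ℝ × ℝ) : ℝ := N (v.1 ^ α₁, v.2 ^ α₂)

def anisoSphere : Set (ℝ × ℝ) := {v | 0 ≤ v.1 ∧ 0 ≤ v.2 ∧ anisoRadius N α₁ α₂ v = 1}

variable {N α₁ α₂}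

theorem continuous_anisoRadius (hα₁ : 0 ≤ α₁) (hα₂ : 0 ≤ α₂) :
    Continuous (anisoRadius N α₁ α₂) :=
  N.continuous_of_finiteDimensional.comp
    ((continuous_fst.rpow_const fun _ => Or.inr hα₁).prodMk
      (continuous_snd.rpow_const fun _ => Or.inr hα₂))

theorem anisoRadius_div_rpow (hα₁ : α₁ ≠ 0) (hα₂ : α₂ ≠ 0) {v : ℝ × ℝ} (hv₁ : 0 ≤ v.1)
    (hv₂ : 0 ≤ v.2) {s : ℝ} (hs : 0 ≤ s) :
    anisoRadius N α₁ α₂ (v.1 / s ^ (1 / α₁), v.2 / s ^ (1 / α₂))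
      = anisoRadius N α₁ α₂ v / s := by
  have hpow : ∀ {x α : ℝ}, 0 ≤ x → α ≠ 0 → (x / s ^ (1 / α)) ^ α = s⁻¹ * x ^ α :=
    fun hx hα => by
      rw [div_rpow hx (rpow_nonneg hs _), ← rpow_mul hs, one_div_mul_cancel hα, rpow_one,
        inv_mul_eq_div]
  simp only [anisoRadius, hpow hv₁ hα₁, hpow hv₂ hα₂]
  rw [← smul_eq_mul s⁻¹ (v.1 ^ α₁), ← smul_eq_mul s⁻¹ (v.2 ^ α₂), ← Prod.smul_mk,
    map_smul_eq_mul, norm_inv, norm_of_nonneg hs, inv_mul_eq_div]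

theorem div_rpow_mem_anisoSphere (hα₁ : α₁ ≠ 0) (hα₂ : α₂ ≠ 0) {v : ℝ × ℝ} (hv₁ : 0 ≤ v.1)
    (hv₂ : 0 ≤ v.2) (hv : 0 < anisoRadius N α₁ α₂ v) :
    (v.1 / anisoRadius N α₁ α₂ v ^ (1 / α₁), v.2 / anisoRadius N α₁ α₂ v ^ (1 / α₂))
      ∈ anisoSphere N α₁ α₂ :=
  ⟨by positivity, by positivity, by rw [anisoRadius_div_rpow hα₁ hα₂ hv₁ hv₂ hv.le,
    div_self hv.ne']⟩

theorem mul_rpow_fst_le_anisoRadius {c : ℝ} (hc : ∀ w, c * ‖w‖ ≤ N w) (hc₀ : 0 ≤ c)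
    {v : ℝ × ℝ} (hv : 0 ≤ v.1) : c * v.1 ^ α₁ ≤ anisoRadius N α₁ α₂ v := by
  have h := norm_fst_le (v.1 ^ α₁, v.2 ^ α₂)
  rw [Real.norm_of_nonneg (rpow_nonneg hv _)] at h
  exact (mul_le_mul_of_nonneg_left h hc₀).trans (hc _)

theorem mul_rpow_snd_le_anisoRadius {c : ℝ} (hc : ∀ w, c * ‖w‖ ≤ N w) (hc₀ : 0 ≤ c)
    {v : ℝ × ℝ} (hv : 0 ≤ v.2) : c * v.2 ^ α₂ ≤ anisoRadius N α₁ α₂ v := by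
  have h := norm_snd_le (v.1 ^ α₁, v.2 ^ α₂)
  rw [Real.norm_of_nonneg (rpow_nonneg hv _)] at h
  exact (mul_le_mul_of_nonneg_left h hc₀).trans (hc _)

theorem mul_min_rpow_le_anisoRadius {c : ℝ} (hc : ∀ w, c * ‖w‖ ≤ N w) (hc₀ : 0 ≤ c)
    {v : ℝ × ℝ} (hα₁ : 0 ≤ α₁) (hα₂ : 0 ≤ α₂) {ε : ℝ} (hε : 0 ≤ ε)
    (hv₁ : 0 ≤ v.1) (hv₂ : 0 ≤ v.2) (hεv : ε ≤ ‖v‖) :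
    c * min (ε ^ α₁) (ε ^ α₂) ≤ anisoRadius N α₁ α₂ v := by
  rw [Prod.norm_def, norm_of_nonneg hv₁, norm_of_nonneg hv₂] at hεv
  rcases le_max_iff.mp hεv with h | h
  · calc c * min (ε ^ α₁) (ε ^ α₂) ≤ c * v.1 ^ α₁ := by
          gcongr
          exact (min_le_left _ _).trans (rpow_le_rpow hε h hα₁)
      _ ≤ _ := mul_rpow_fst_le_anisoRadius hc hc₀ hv₁
  · calc c * min (ε ^ α₁) (ε ^ α₂) ≤ c * v.2 ^ α₂ := by
          gcongr
          exact (min_le_right _ _).trans (rpow_le_rpow hε h hα₂)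
      _ ≤ _ := mul_rpow_snd_le_anisoRadius hc hc₀ hv₂

theorem anisoRadius_sublevel_subset {c : ℝ} (hc : ∀ w, c * ‖w‖ ≤ N w) (hc₀ : 0 < c)
    (hα₁ : 0 < α₁) (hα₂ : 0 < α₂) (X : ℝ) :
    {v : ℝ × ℝ | 0 ≤ v.1 ∧ 0 ≤ v.2 ∧ anisoRadius N α₁ α₂ v ≤ X}
      ⊆ Icc 0 ((X / c) ^ α₁⁻¹) ×ˢ Icc 0 ((X / c) ^ α₂⁻¹) := by
  rintro v ⟨hv₁, hv₂, hvX⟩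
  have hbound : ∀ {x α : ℝ}, 0 ≤ x → 0 < α → c * x ^ α ≤ X → x ≤ (X / c) ^ α⁻¹ :=
    fun hx hα h => (le_rpow_inv_iff_of_pos hx (div_nonneg ((mul_nonneg hc₀.le
      (rpow_nonneg hx _)).trans h) hc₀.le) hα).mpr ((le_div_iff₀' hc₀).mpr h)
  exact ⟨⟨hv₁, hbound hv₁ hα₁ ((mul_rpow_fst_le_anisoRadius hc hc₀.le hv₁).trans hvX)⟩,
    ⟨hv₂, hbound hv₂ hα₂ ((mul_rpow_snd_le_anisoRadius hc hc₀.le hv₂).trans hvX)⟩⟩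

theorem integrableOn_anisoRadius_rpow_neg (hN : ∀ v, N v = 0 → v = 0) (hα₁ : 0 < α₁)
    (hα₂ : 0 < α₂) {γ : ℝ} (hγ : 1 / α₁ + 1 / α₂ < γ) {s : Set (ℝ × ℝ)} (hs : MeasurableSet s) {r₀ : ℝ}
    (hr₀ : 0 < r₀) (hsR : ∀ v ∈ s, 0 ≤ v.1 ∧ 0 ≤ v.2 ∧ r₀ ≤ anisoRadius N α₁ α₂ v) :
    IntegrableOn (fun v => anisoRadius N α₁ α₂ v ^ (-γ)) s := by
  obtain ⟨c, hc₀, hc⟩ := N.exists_pos_mul_norm_le hN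
  set p := α₁⁻¹ + α₂⁻¹
  have hγ₀ : 0 < γ := lt_trans (by positivity) hγ
  have hpγ : p / γ < 1 := (div_lt_one hγ₀).mpr (by simpa only [p, one_div] using hγ)
  refine integrableOn_of_measure_inter_lt_le_rpow hs
    ((continuous_anisoRadius hα₁.le hα₂.le).measurable.pow_const _)
    (fun v hv => rpow_nonneg (hr₀.le.trans (hsR v hv).2.2) _)
    (fun v hv => rpow_le_rpow_of_nonpos hr₀ (hsR v hv).2.2 (neg_nonpos.mpr hγ₀.le)) hpγ
    (K := c ^ (-p)) fun t ht => ?_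
  set X := t ^ (-γ)⁻¹
  have hsub : s ∩ {v | t < anisoRadius N α₁ α₂ v ^ (-γ)}
      ⊆ {v | 0 ≤ v.1 ∧ 0 ≤ v.2 ∧ anisoRadius N α₁ α₂ v ≤ X} := by
    rintro v ⟨hv, htv⟩
    obtain ⟨hv₁, hv₂, hvR⟩ := hsR v hv
    exact ⟨hv₁, hv₂, ((lt_rpow_inv_iff_of_neg (hr₀.trans_le hvR) ht
      (neg_neg_of_pos hγ₀)).mpr htv).le⟩
  calc volume (s ∩ {v | t < anisoRadius N α₁ α₂ v ^ (-γ)})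
      ≤ volume (Icc 0 ((X / c) ^ α₁⁻¹) ×ˢ Icc 0 ((X / c) ^ α₂⁻¹)) :=
        measure_mono (hsub.trans (anisoRadius_sublevel_subset hc hc₀ hα₁ hα₂ X))
    _ = ENNReal.ofReal ((X / c) ^ α₁⁻¹) * ENNReal.ofReal ((X / c) ^ α₂⁻¹) := by
        rw [Measure.volume_eq_prod, Measure.prod_prod, Real.volume_Icc, Real.volume_Icc,
          sub_zero, sub_zero]
    _ = ENNReal.ofReal (c ^ (-p) * t ^ (-(p / γ))) := by
        rw [← ENNReal.ofReal_mul (by positivity), ← rpow_add (by positivity),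
          div_rpow (by positivity) hc₀.le, ← rpow_mul ht.le, rpow_neg hc₀.le]
        congr 1
        rw [div_eq_mul_inv, mul_comm]
        congr 2
        simp only [p]
        field_simp

theorem eventually_abs_rescaledDensity_sub_le (hα₁ : 0 < α₁) (hα₂ : 0 < α₂) {f : ℝ × ℝ → ℝ}
    {lam₀ : ℝ → ℝ → ℝ}
    (hunif : TendstoUniformlyOn (rescaledDensity f α₁ α₂) (fun v => lam₀ v.1 v.2) atTop
      (anisoSphere N α₁ α₂))
    {s : Set (ℝ × ℝ)} {r₀ : ℝ} (hr₀ : 0 < r₀)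
    (hsR : ∀ v ∈ s, 0 ≤ v.1 ∧ 0 ≤ v.2 ∧ r₀ ≤ anisoRadius N α₁ α₂ v) {δ : ℝ} (hδ : 0 < δ) :
    ∀ᶠ t in atTop, ∀ v ∈ s, |rescaledDensity f α₁ α₂ t v -
        lam₀ (v.1 / anisoRadius N α₁ α₂ v ^ (1 / α₁)) (v.2 / anisoRadius N α₁ α₂ v ^ (1 / α₂))
          * anisoRadius N α₁ α₂ v ^ (-(1 + 1 / α₁ + 1 / α₂))|
      ≤ δ * anisoRadius N α₁ α₂ v ^ (-(1 + 1 / α₁ + 1 / α₂)) := by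
  obtain ⟨T, hT⟩ := eventually_atTop.mp (Metric.tendstoUniformlyOn_iff.mp hunif δ hδ)
  filter_upwards [eventually_ge_atTop (T / r₀), eventually_gt_atTop 0] with t htT ht v hv
  obtain ⟨hv₁, hv₂, hvR⟩ := hsR v hv
  have hR : 0 < anisoRadius N α₁ α₂ v := hr₀.trans_le hvR
  have hTt : T ≤ t * anisoRadius N α₁ α₂ v :=
    calc T ≤ t * r₀ := (div_le_iff₀ hr₀).mp htT
      _ ≤ t * anisoRadius N α₁ α₂ v := by gcongr
  have hdist := hT _ hTt _ (div_rpow_mem_anisoSphere hα₁.ne' hα₂.ne' hv₁ hv₂ hR)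
  rw [rescaledDensity_eq_mul_rpow_mul f α₁ α₂ ht hR v, ← sub_mul, abs_mul,
    abs_of_nonneg (rpow_nonneg hR.le _)]
  rw [dist_comm, Real.dist_eq] at hdist
  exact mul_le_mul_of_nonneg_right hdist.le (rpow_nonneg hR.le _)

end Anisotropic

theorem stmt_19_general
    (N : Seminorm ℝ (ℝ × ℝ)) (hN : ∀ v : ℝ × ℝ, N v = 0 → v = 0)
    (α₁ α₂ : ℝ) (hα₁ : 0 < α₁) (hα₂ : 0 < α₂)
    (f : ℝ × ℝ → ℝ) (hf_meas : Measurable f) (hf_nonneg : ∀ v, 0 ≤ f v)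
    {Ω : Type*} [MeasureSpace Ω]
    (V : Ω → ℝ × ℝ)
    -- `(X,Y) = V` has density `f`:
    (hdens : ∀ A : Set (ℝ × ℝ), MeasurableSet A →
      ℙ (V ⁻¹' A) = ∫⁻ v in A, ENNReal.ofReal (f v))
    (lam₀ lamfun : ℝ → ℝ → ℝ)
    -- the limit function `λ`:
    (hlamfun : ∀ x y : ℝ, lamfun x y =
      lam₀ (x / (N (x ^ α₁, y ^ α₂) : ℝ) ^ (1 / α₁))
          (y / (N (x ^ α₁, y ^ α₂) : ℝ) ^ (1 / α₂)) *
        (N (x ^ α₁, y ^ α₂) : ℝ) ^ (-(1 + 1 / α₁ + 1 / α₂)))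
    -- the convergence is uniform on `E₀`:
    (hunif : TendstoUniformlyOn
      (fun (t : ℝ) (v : ℝ × ℝ) =>
        f (t ^ (1 / α₁) * v.1, t ^ (1 / α₂) * v.2) /
          (t * t ^ (1 / α₁) * t ^ (1 / α₂))⁻¹)
      (fun v : ℝ × ℝ => lam₀ v.1 v.2) atTop
      {v : ℝ × ℝ | 0 ≤ v.1 ∧ 0 ≤ v.2 ∧ N (v.1 ^ α₁, v.2 ^ α₂) = 1}) :
    ∀ A : Set (ℝ × ℝ), MeasurableSet A →
      A ⊆ {v : ℝ × ℝ | 0 ≤ v.1 ∧ 0 ≤ v.2} \ {(0, 0)} →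
      (∃ ε : ℝ, 0 < ε ∧ ∀ v ∈ A, ε ≤ ‖v‖) →
      IntegrableOn (fun v : ℝ × ℝ => lamfun v.1 v.2) A →
      Tendsto
        (fun t : ℝ =>
          t * (ℙ {ω | ((V ω).1 / t ^ (1 / α₁), (V ω).2 / t ^ (1 / α₂)) ∈ A}).toReal)
        atTop (𝓝 (∫ v in A, lamfun v.1 v.2)) := by
  intro A hA hA_sub ⟨ε, hε, hεA⟩ hlam
  obtain ⟨c, hc₀, hc⟩ := N.exists_pos_mul_norm_le hN
  have hr₀ : 0 < c * min (ε ^ α₁) (ε ^ α₂) := by positivity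
  have hAR : ∀ v ∈ A, 0 ≤ v.1 ∧ 0 ≤ v.2 ∧
      c * min (ε ^ α₁) (ε ^ α₂) ≤ anisoRadius N α₁ α₂ v := fun v hv =>
    ⟨(hA_sub hv).1.1, (hA_sub hv).1.2, mul_min_rpow_le_anisoRadius hc hc₀.le hα₁.le hα₂.le
      hε.le (hA_sub hv).1.1 (hA_sub hv).1.2 (hεA v hv)⟩
  have hweight := integrableOn_anisoRadius_rpow_neg hN hα₁ hα₂
    (by linarith : 1 / α₁ + 1 / α₂ < 1 + 1 / α₁ + 1 / α₂) hA hr₀ hAR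
  refine (tendsto_setIntegral_of_forall_abs_sub_le (F := rescaledDensity f α₁ α₂) hA
    (fun t => (measurable_rescaledDensity hf_meas α₁ α₂ t).aestronglyMeasurable) hlam hweight
    fun δ hδ => ?_).congr' ?_
  · filter_upwards [eventually_abs_rescaledDensity_sub_le hα₁ hα₂ hunif hr₀ hAR hδ]
      with t ht v hv
    rw [hlamfun]
    exact ht v hv
  · filter_upwards [eventually_gt_atTop 0] with t ht
    exact (mul_measure_preimage_eq_setIntegral_rescaledDensity hf_meas hf_nonneg hdens
      α₁ α₂ hA ht).symm

/-- if a pdf `f` on `ℝ₊²` is non-standard regularly varying with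
power-law scaling `t^{1/α₁}, t^{1/α₂}` and `h(t) = (t t^{1/α₁} t^{1/α₂})⁻¹`,
with limit function `λ(x,y) = λ₀(x/‖w‖^{1/α₁}, y/‖w‖^{1/α₂})‖w‖^{-(1+1/α₁+1/α₂)}`
(`w = (x^{α₁}, y^{α₂})`), `λ₀` positive and bounded on `E₀`, and the
convergence is uniform on `E₀`, then the measure induced by `f` is regularly
varying: `t ℙ[(X/t^{1/α₁}, Y/t^{1/α₂}) ∈ A] → ∫_A λ` for Borel sets
`A ⊆ ℝ₊² \ {0}` bounded away from `0` with `∫_A λ < ∞`. -/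
theorem stmt_19
    (N : Seminorm ℝ (ℝ × ℝ)) (hN : ∀ v : ℝ × ℝ, N v = 0 → v = 0)
    (α₁ α₂ : ℝ) (hα₁ : 0 < α₁) (hα₂ : 0 < α₂)
    (f : ℝ × ℝ → ℝ) (hf_meas : Measurable f) (hf_nonneg : ∀ v, 0 ≤ f v)
    (hf_supp : ∀ v : ℝ × ℝ, ¬(0 ≤ v.1 ∧ 0 ≤ v.2) → f v = 0)
    (hf_pdf : ∫⁻ v : ℝ × ℝ, ENNReal.ofReal (f v) = 1)
    {Ω : Type*} [MeasureSpace Ω] [IsProbabilityMeasure (ℙ : Measure Ω)]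
    (V : Ω → ℝ × ℝ) (hV : Measurable V)
    -- `(X,Y) = V` has density `f`:
    (hdens : ∀ A : Set (ℝ × ℝ), MeasurableSet A →
      ℙ (V ⁻¹' A) = ∫⁻ v in A, ENNReal.ofReal (f v))
    (lam₀ lamfun : ℝ → ℝ → ℝ)
    -- `λ₀` is positive and bounded on `E₀`:
    (hlam₀_pos : ∀ x y : ℝ, 0 ≤ x → 0 ≤ y → N (x ^ α₁, y ^ α₂) = 1 →
      0 < lam₀ x y)
    (hlam₀_bdd : ∃ M : ℝ, ∀ x y : ℝ, 0 ≤ x → 0 ≤ y →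
      N (x ^ α₁, y ^ α₂) = 1 → lam₀ x y ≤ M)
    -- the limit function `λ`:
    (hlamfun : ∀ x y : ℝ, lamfun x y =
      lam₀ (x / (N (x ^ α₁, y ^ α₂) : ℝ) ^ (1 / α₁))
          (y / (N (x ^ α₁, y ^ α₂) : ℝ) ^ (1 / α₂)) *
        (N (x ^ α₁, y ^ α₂) : ℝ) ^ (-(1 + 1 / α₁ + 1 / α₂)))
    -- `f` is regularly varying with power-law scaling:
    (hRVf : ∀ x y : ℝ, 0 < x → 0 < y →
      Tendsto
        (fun t : ℝ => f (t ^ (1 / α₁) * x, t ^ (1 / α₂) * y) /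
          (t * t ^ (1 / α₁) * t ^ (1 / α₂))⁻¹)
        atTop (𝓝 (lamfun x y)))
    -- the convergence is uniform on `E₀`:
    (hunif : TendstoUniformlyOn
      (fun (t : ℝ) (v : ℝ × ℝ) =>
        f (t ^ (1 / α₁) * v.1, t ^ (1 / α₂) * v.2) /
          (t * t ^ (1 / α₁) * t ^ (1 / α₂))⁻¹)
      (fun v : ℝ × ℝ => lam₀ v.1 v.2) atTop
      {v : ℝ × ℝ | 0 ≤ v.1 ∧ 0 ≤ v.2 ∧ N (v.1 ^ α₁, v.2 ^ α₂) = 1}) :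
    ∀ A : Set (ℝ × ℝ), MeasurableSet A →
      A ⊆ {v : ℝ × ℝ | 0 ≤ v.1 ∧ 0 ≤ v.2} \ {(0, 0)} →
      (∃ ε : ℝ, 0 < ε ∧ ∀ v ∈ A, ε ≤ ‖v‖) →
      IntegrableOn (fun v : ℝ × ℝ => lamfun v.1 v.2) A →
      Tendsto
        (fun t : ℝ =>
          t * (ℙ {ω | ((V ω).1 / t ^ (1 / α₁), (V ω).2 / t ^ (1 / α₂)) ∈ A}).toReal)
        atTop (𝓝 (∫ v in A, lamfun v.1 v.2)) :=
  stmt_19_general N hN α₁ α₂ hα₁ hα₂ f hf_meas hf_nonneg V hdens lam₀ lamfun hlamfun hunif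
end
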